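/- arXiv:1804.03736 — 11 statements merged into one kernel-verified Lean document; each statement's English description precedes it below -/
import Mathlib

section
/- Let X be an ↑↓-closed topologized poset. Then the closure of any chain in X is again a chain. -/
/-- Let `X` be an ↑↓-closed topologized poset (i.e., all sets `↑x` and `↓x`
are closed). Then the closure of any chain in `X` is again a chain. -/
theorem stmt1 {X : Type*} [PartialOrder X] [TopologicalSpace X]
    (hud : ∀ x : X, IsClosed (Set.Ici x) ∧ IsClosed (Set.Iic x))
    (C : Set X) (hC : IsChain (· ≤ ·) C) :
    IsChain (· ≤ ·) (closure C) := by
  -- Step 1: every point of `closure C` is comparable with every point of `C`.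
  have key : ∀ y ∈ C, ∀ x ∈ closure C, x ≤ y ∨ y ≤ x := by
    intro y hy x hx
    have hsub : C ⊆ Set.Ici y ∪ Set.Iic y := by
      intro z hz
      rcases eq_or_ne z y with rfl | hne
      · exact Or.inl le_rfl
      · rcases hC hz hy hne with h | h
        · exact Or.inr h
        · exact Or.inl h
    have hcl : closure C ⊆ Set.Ici y ∪ Set.Iic y :=
      closure_minimal hsub (((hud y).1).union ((hud y).2))
    rcases hcl hx with h | h
    · exact Or.inr h
    · exact Or.inl h
  -- Step 2: conclude.
  intro a ha b hb hne
  have hsub : C ⊆ Set.Ici a ∪ Set.Iic a := by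
    intro z hz
    rcases key z hz a ha with h | h
    · exact Or.inl h
    · exact Or.inr h
  have hcl : closure C ⊆ Set.Ici a ∪ Set.Iic a :=
    closure_minimal hsub (((hud a).1).union ((hud a).2))
  rcases hcl hb with h | h
  · exact Or.inl h
  · exact Or.inr h
end

section
/- Every complete topologized semilattice is Zar-compact, i.e., its weak• topology is compact. -/
open Set TopologicalSpace

variable (X : Type*)

/-- The weak• topology `𝒵_X` of a topologized semilattice: generated by the subbase of
complements of closed subsemilattices. -/
def zarTop [SemilatticeInf X] [TopologicalSpace X] : TopologicalSpace X :=
  TopologicalSpace.generateFrom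
    {U : Set X | ∃ S : Set X, IsClosed S ∧ (∀ a ∈ S, ∀ b ∈ S, a ⊓ b ∈ S) ∧ U = Sᶜ}

/-- The weak° topology `η_X` of a topologized semilattice: generated by the base of
open subsemilattices. -/
def etaTop [SemilatticeInf X] [TopologicalSpace X] : TopologicalSpace X :=
  TopologicalSpace.generateFrom
    {U : Set X | IsOpen U ∧ ∀ a ∈ U, ∀ b ∈ U, a ⊓ b ∈ U}

/-- The `𝕀`-weak topology `𝒲_X`: generated by the subbase of preimages of open subsets of
`[0,1]` under continuous homomorphisms `h : X → ([0,1], min)`. -/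
def iweakTop [SemilatticeInf X] [TopologicalSpace X] : TopologicalSpace X :=
  TopologicalSpace.generateFrom
    {V : Set X | ∃ h : X → unitInterval, Continuous h ∧
      (∀ x y : X, h (x ⊓ y) = min (h x) (h y)) ∧
      ∃ U : Set unitInterval, IsOpen U ∧ V = h ⁻¹' U}

/-- `U` is Scott-open: `U = ↑U` and every nonempty up-directed set whose supremum lies in
`U` meets `U`. -/
def ScottOpen [Preorder X] (U : Set X) : Prop :=
  IsUpperSet U ∧ ∀ D : Set X, D.Nonempty → DirectedOn (· ≤ ·) D →
    ∀ a : X, IsLUB D a → a ∈ U → (D ∩ U).Nonempty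

/-- The Lawson topology `Λ_X`: generated by the subbase consisting of Scott-open sets and
complements of upper sets `↑x`. -/
def lawsonTop [Preorder X] : TopologicalSpace X :=
  TopologicalSpace.generateFrom
    ({U : Set X | ScottOpen X U} ∪ {V : Set X | ∃ x : X, V = (Set.Ici x)ᶜ})

/-- The interval topology: generated by the subbase of complements of the sets `↑x`, `↓x`. -/
def intervalTop [Preorder X] : TopologicalSpace X :=
  TopologicalSpace.generateFrom
    ({V : Set X | ∃ x : X, V = (Set.Ici x)ᶜ} ∪ {V : Set X | ∃ x : X, V = (Set.Iic x)ᶜ})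

/-- A topologized semilattice is complete if every nonempty chain `C` has an infimum and a
supremum in `X`, both belonging to the closure of `C`. -/
def CompleteTS [SemilatticeInf X] [TopologicalSpace X] : Prop :=
  ∀ C : Set X, C.Nonempty → IsChain (· ≤ ·) C →
    (∃ a : X, IsGLB C a ∧ a ∈ closure C) ∧ (∃ b : X, IsLUB C b ∧ b ∈ closure C)

section Helpers

/-- Zorn's lemma for minimal elements, over a plain preorder. -/
theorem zorn_min_aux {α : Type*} [Preorder α] (s : Set α)
    (ih : ∀ c ⊆ s, IsChain (· ≤ ·) c → ∃ lb ∈ s, ∀ z ∈ c, lb ≤ z) :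
    ∃ m ∈ s, ∀ z ∈ s, z ≤ m → m ≤ z := by
  have H := zorn_le₀ (α := αᵒᵈ) (OrderDual.ofDual ⁻¹' s) ?_
  · obtain ⟨m, hm⟩ := H
    refine ⟨OrderDual.ofDual m, hm.1, fun z hz hzm => ?_⟩
    exact hm.2 (show OrderDual.toDual z ∈ _ from hz) hzm
  · intro c hc hchain
    have hchain' : IsChain (· ≤ ·) (OrderDual.toDual ⁻¹' c : Set α) := by
      intro a ha b hb hab
      have := hchain hb ha (fun h => hab (congrArg OrderDual.ofDual h).symm)
      exact this
    obtain ⟨lb, hlbs, hlb⟩ := ih (OrderDual.toDual ⁻¹' c)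
      (fun a ha => hc ha) hchain'
    exact ⟨OrderDual.toDual lb, hlbs, fun z hz => hlb (OrderDual.ofDual z) hz⟩

variable {X : Type*} [SemilatticeInf X] [TopologicalSpace X]

omit [TopologicalSpace X] in
/-- A nonempty inf-subsemilattice in which every nonempty chain has a lower bound
(inside the set) has a least element. -/
theorem exists_min_of_chainLB {T : Set X} (hne : T.Nonempty)
    (hsub : ∀ a ∈ T, ∀ b ∈ T, a ⊓ b ∈ T)
    (hch : ∀ C ⊆ T, C.Nonempty → IsChain (· ≤ ·) C → ∃ a ∈ T, a ∈ lowerBounds C) :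
    ∃ m ∈ T, ∀ s ∈ T, m ≤ s := by
  have hzorn : ∀ c ⊆ T, IsChain (· ≤ ·) c → ∃ lb ∈ T, ∀ z ∈ c, lb ≤ z := by
    intro c hc hchain
    rcases c.eq_empty_or_nonempty with rfl | hcne
    · obtain ⟨a, ha⟩ := hne
      exact ⟨a, ha, fun z hz => absurd hz (Set.notMem_empty z)⟩
    · obtain ⟨a, haT, halb⟩ := hch c hc hcne hchain
      exact ⟨a, haT, fun z hz => halb hz⟩
  obtain ⟨m, hmT, hm⟩ := zorn_min_aux T hzorn
  refine ⟨m, hmT, fun s hs => ?_⟩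
  have h1 : m ⊓ s ∈ T := hsub _ hmT s hs
  have h3 := hm _ h1 inf_le_left
  exact le_trans h3 inf_le_right

/-- In a complete topologized semilattice, for a closed subsemilattice `S` and `x`
with `S ∩ ↑x` nonempty, there is a least element of `S ∩ ↑x`. -/
theorem exists_min_inter_Ici (hcomp : CompleteTS X) {S : Set X} (hScl : IsClosed S)
    (hSsub : ∀ a ∈ S, ∀ b ∈ S, a ⊓ b ∈ S) {x : X} (hx : (S ∩ Set.Ici x).Nonempty) :
    ∃ m, m ∈ S ∧ x ≤ m ∧ ∀ s ∈ S, x ≤ s → m ≤ s := by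
  have hs2 : ∀ a ∈ S ∩ Set.Ici x, ∀ b ∈ S ∩ Set.Ici x, a ⊓ b ∈ S ∩ Set.Ici x := by
    rintro a ⟨haS, hax⟩ b ⟨hbS, hbx⟩
    exact ⟨hSsub a haS b hbS, le_inf hax hbx⟩
  have hs3 : ∀ C ⊆ S ∩ Set.Ici x, C.Nonempty → IsChain (· ≤ ·) C →
      ∃ a ∈ S ∩ Set.Ici x, a ∈ lowerBounds C := by
    intro C hC hCne hchain
    obtain ⟨⟨a, haglb, hacl⟩, -⟩ := hcomp C hCne hchain
    refine ⟨a, ⟨hScl.closure_subset_iff.2 (fun z hz => (hC hz).1) hacl,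
      haglb.2 (fun c hc => (hC hc).2)⟩, haglb.1⟩
  obtain ⟨m, hmT, hmin⟩ := exists_min_of_chainLB hx hs2 hs3
  exact ⟨m, hmT.1, hmT.2, fun s hs hxs => hmin s ⟨hs, hxs⟩⟩

/-- Key FIP lemma: a nonempty family of nonempty closed subsemilattices closed under
pairwise intersection has a common point. -/
theorem key_fip (hcomp : CompleteTS X) (F : Set (Set X))
    (hcl : ∀ S ∈ F, IsClosed S)
    (hsub : ∀ S ∈ F, ∀ a ∈ S, ∀ b ∈ S, a ⊓ b ∈ S)
    (hne : ∀ S ∈ F, S.Nonempty)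
    (hint : ∀ S ∈ F, ∀ T ∈ F, S ∩ T ∈ F)
    (h0 : F.Nonempty) :
    ∃ x, ∀ S ∈ F, x ∈ S := by
  classical
  set Z : Set X := {x | ∀ S ∈ F, ∃ s ∈ S, x ≤ s} with hZ
  obtain ⟨S₀, hS₀⟩ := h0
  have hch0 : ∀ C ⊆ S₀, C.Nonempty → IsChain (· ≤ ·) C → ∃ a ∈ S₀, a ∈ lowerBounds C := by
    intro C hC hCne hchain
    obtain ⟨⟨a, haglb, hacl⟩, -⟩ := hcomp C hCne hchain
    exact ⟨a, (hcl S₀ hS₀).closure_subset_iff.2 hC hacl, haglb.1⟩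
  obtain ⟨m₀, hm₀S, hm₀min⟩ := exists_min_of_chainLB (hne S₀ hS₀) (hsub S₀ hS₀) hch0
  have hm₀Z : m₀ ∈ Z := by
    intro T hT
    obtain ⟨u, huS, huT⟩ := hne _ (hint S₀ hS₀ T hT)
    exact ⟨u, huT, hm₀min u huS⟩
  have hih : ∀ C ⊆ Z, IsChain (· ≤ ·) C → ∀ y ∈ C, ∃ ub ∈ Z, ∀ z ∈ C, z ≤ ub := by
    intro C hCZ hchain y hy
    obtain ⟨-, b, hblub, -⟩ := hcomp C ⟨y, hy⟩ hchain
    refine ⟨b, ?_, fun z hz => hblub.1 hz⟩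
    intro S hS
    have H : ∀ c ∈ C, ∃ m, m ∈ S ∧ c ≤ m ∧ ∀ s ∈ S, c ≤ s → m ≤ s := by
      intro c hc
      obtain ⟨s, hsS, hcs⟩ := hCZ hc S hS
      exact exists_min_inter_Ici hcomp (hcl S hS) (hsub S hS) ⟨s, hsS, hcs⟩
    choose f hfS hfge hfmin using H
    set C' : Set X := {y | ∃ c, ∃ hc : c ∈ C, y = f c hc} with hC'
    have hC'S : C' ⊆ S := by rintro _ ⟨c, hc, rfl⟩; exact hfS c hc
    have hC'ne : C'.Nonempty := ⟨f y hy, y, hy, rfl⟩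
    have hC'chain : IsChain (· ≤ ·) C' := by
      rintro _ ⟨c1, h1, rfl⟩ _ ⟨c2, h2, rfl⟩ -
      rcases eq_or_ne c1 c2 with rfl | hne12
      · exact Or.inl le_rfl
      · rcases hchain h1 h2 hne12 with h | h
        · exact Or.inl (hfmin c1 h1 (f c2 h2) (hfS c2 h2) (h.trans (hfge c2 h2)))
        · exact Or.inr (hfmin c2 h2 (f c1 h1) (hfS c1 h1) (h.trans (hfge c1 h1)))
    obtain ⟨-, s', hslub, hscl⟩ := hcomp C' hC'ne hC'chain
    refine ⟨s', (hcl S hS).closure_subset_iff.2 hC'S hscl, ?_⟩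
    exact hblub.2 (fun c hc => (hfge c hc).trans (hslub.1 ⟨c, hc, rfl⟩))
  obtain ⟨m, -, hmmax⟩ := zorn_le_nonempty₀ Z hih m₀ hm₀Z
  refine ⟨m, fun S hS => ?_⟩
  obtain ⟨s, hsS, hms⟩ := hmmax.1 S hS
  obtain ⟨y, hyS, hmy, hymin⟩ :=
    exists_min_inter_Ici hcomp (hcl S hS) (hsub S hS) ⟨s, hsS, hms⟩
  have hyZ : y ∈ Z := by
    intro T hT
    obtain ⟨u, ⟨huS, huT⟩, hmu⟩ := hmmax.1 (S ∩ T) (hint S hS T hT)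
    exact ⟨u, huT, hymin u huS hmu⟩
  have hym : y = m := le_antisymm (hmmax.2 hyZ hmy) hmy
  exact hym ▸ hyS

end Helpers

/-- Every complete topologized semilattice is Zar-compact, i.e.,
its weak• topology is compact. -/
theorem stmt2 {X : Type*} [SemilatticeInf X] [TopologicalSpace X]
    (hcomp : CompleteTS X) :
    @CompactSpace X (zarTop X) := by
  rw [← @isCompact_univ_iff X (zarTop X)]
  rw [@isCompact_iff_ultrafilter_le_nhds X (zarTop X)]
  intro U hU
  set F : Set (Set X) := {S | IsClosed S ∧ (∀ a ∈ S, ∀ b ∈ S, a ⊓ b ∈ S) ∧ S ∈ U} with hF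
  obtain ⟨x, hx⟩ := key_fip hcomp F
    (fun S hS => hS.1) (fun S hS => hS.2.1)
    (fun S hS => U.nonempty_of_mem hS.2.2)
    (fun S hS T hT => ⟨hS.1.inter hT.1,
      fun a ha b hb => ⟨hS.2.1 a ha.1 b hb.1, hT.2.1 a ha.2 b hb.2⟩,
      Filter.inter_mem hS.2.2 hT.2.2⟩)
    ⟨Set.univ, isClosed_univ, fun a _ b _ => Set.mem_univ _, Filter.univ_mem⟩
  refine ⟨x, Set.mem_univ x, ?_⟩
  show (U : Filter X) ≤ @nhds X (zarTop X) x
  rw [zarTop, TopologicalSpace.nhds_generateFrom]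
  refine le_iInf₂ fun s hs => ?_
  obtain ⟨hxs, S, hScl, hSsub, rfl⟩ := hs
  rw [Filter.le_principal_iff]
  rcases U.mem_or_compl_mem S with h | h
  · exact absurd (hx S ⟨hScl, hSsub, h⟩) hxs
  · exact h
end

section
/- Every Zar-compact topologized semilattice is chain-compact, i.e., every closed chain in X is compact. -/
open Set TopologicalSpace

variable (X : Type*)

/-- Every Zar-compact topologized semilattice is chain-compact, i.e., every
closed chain in `X` is compact. -/
theorem stmt3 {X : Type*} [SemilatticeInf X] [TopologicalSpace X]
    (hzar : @CompactSpace X (zarTop X)) :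
    ∀ C : Set X, IsClosed C → IsChain (· ≤ ·) C → IsCompact C := by
  intro C hC hchain
  have hzarClosed : ∀ S : Set X, S ⊆ C → IsClosed S → @IsClosed X (zarTop X) S := by
    intro S hSC hS
    have hsub : ∀ a ∈ S, ∀ b ∈ S, a ⊓ b ∈ S := by
      intro a ha b hb
      rcases eq_or_ne a b with rfl | hne
      · simpa using ha
      · rcases hchain (hSC ha) (hSC hb) hne with h | h
        · simpa [inf_eq_left.mpr h] using ha
        · simpa [inf_eq_right.mpr h] using hb
    refine (@isOpen_compl_iff X S (zarTop X)).mp ?_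
    show TopologicalSpace.GenerateOpen _ Sᶜ
    exact .basic _ ⟨S, hS, hsub, rfl⟩
  have hCzar : @IsCompact X (zarTop X) C :=
    @IsCompact.of_isClosed_subset X (zarTop X) _ _
      (@isCompact_univ X (zarTop X) hzar) (hzarClosed C le_rfl hC) (subset_univ C)
  refine isCompact_of_finite_subfamily_closed ?_
  intro ι Z hZ hempty
  have key' : C ∩ ⋂ i, (C ∩ Z i) = C ∩ ⋂ i, Z i := by
    ext x
    simp only [mem_inter_iff, mem_iInter]
    constructor
    · rintro ⟨hx, h⟩; exact ⟨hx, fun i => (h i).2⟩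
    · rintro ⟨hx, h⟩; exact ⟨hx, fun i => ⟨hx, h i⟩⟩
  obtain ⟨t, ht⟩ := @IsCompact.elim_finite_subfamily_closed X (zarTop X) C ι hCzar
    (fun i => C ∩ Z i)
    (fun i => hzarClosed _ inter_subset_left (hC.inter (hZ i)))
    (by rw [key']; exact hempty)
  refine ⟨t, ?_⟩
  have key : C ∩ ⋂ i ∈ t, (C ∩ Z i) = C ∩ ⋂ i ∈ t, Z i := by
    ext x
    simp only [mem_inter_iff, mem_iInter]
    constructor
    · rintro ⟨hx, h⟩; exact ⟨hx, fun i hi => (h i hi).2⟩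
    · rintro ⟨hx, h⟩; exact ⟨hx, fun i hi => ⟨hx, h i hi⟩⟩
  rw [← key]
  exact ht
end

section
/- For an ↑↓-closed topologized semilattice X the following conditions are equivalent: (1) X is complete; (2) X is Zar-compact; (3) X is chain-compact. -/
open Set TopologicalSpace

variable (X : Type*)

section Aux
variable {X : Type*} [SemilatticeInf X] [TopologicalSpace X]

lemma chain_inf_mem {C : Set X} (h : IsChain (· ≤ ·) C) :
    ∀ a ∈ C, ∀ b ∈ C, a ⊓ b ∈ C := by
  intro a ha b hb
  rcases h.total ha hb with hab | hba
  · rwa [inf_eq_left.mpr hab]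
  · rwa [inf_eq_right.mpr hba]

lemma closure_chain_isChain (hud : ∀ x : X, IsClosed (Set.Ici x) ∧ IsClosed (Set.Iic x))
    {C : Set X} (h : IsChain (· ≤ ·) C) : IsChain (· ≤ ·) (closure C) := by
  have step1 : ∀ x ∈ closure C, ∀ c ∈ C, x ≤ c ∨ c ≤ x := by
    intro x hx c hc
    have hsub : closure C ⊆ Ici c ∪ Iic c := by
      apply closure_minimal _ ((hud c).1.union (hud c).2)
      intro y hy
      rcases h.total hc hy with h1 | h1
      · exact Or.inl h1
      · exact Or.inr h1
    rcases hsub hx with h1 | h1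
    · exact Or.inr h1
    · exact Or.inl h1
  intro x hx y hy _
  have hsub : closure C ⊆ Ici x ∪ Iic x := by
    apply closure_minimal _ ((hud x).1.union (hud x).2)
    intro c hc
    rcases step1 x hx c hc with h1 | h1
    · exact Or.inl h1
    · exact Or.inr h1
  rcases hsub hy with h1 | h1
  · exact Or.inl h1
  · exact Or.inr h1
end Aux

section Aux2
set_option linter.unusedSectionVars false
variable {X : Type*} [SemilatticeInf X] [TopologicalSpace X]



lemma exists_min' (hc : ∀ C : Set X, C.Nonempty → IsChain (· ≤ ·) C →
      (∃ a : X, IsGLB C a ∧ a ∈ closure C) ∧ (∃ b : X, IsLUB C b ∧ b ∈ closure C))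
    {S : Set X} (hS : S.Nonempty) (hScl : IsClosed S)
    (hSsub : ∀ a ∈ S, ∀ b ∈ S, a ⊓ b ∈ S) : ∃ m ∈ S, ∀ s ∈ S, m ≤ s := by
  -- first get a minimal element, via Zorn in the dual order
  obtain ⟨x₀, hx₀⟩ := hS
  have hz := zorn_le_nonempty₀ (α := Xᵒᵈ) (OrderDual.ofDual ⁻¹' S) ?ih
      (OrderDual.toDual x₀) hx₀
  case ih =>
    intro c hcS hchain y hy
    -- c is a chain in the dual; as a set of X it is a chain for ≤
    have hchain' : IsChain (· ≤ ·) (OrderDual.ofDual '' c : Set X) := by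
      rintro a ⟨a', ha', rfl⟩ b ⟨b', hb', rfl⟩ hne
      have := hchain ha' hb' (fun h => hne (by rw [h]))
      exact this.symm
    have hne' : (OrderDual.ofDual '' c : Set X).Nonempty := ⟨_, y, hy, rfl⟩
    obtain ⟨⟨a, haglb, hacl⟩, -⟩ := hc _ hne' hchain'
    have haS : a ∈ S := by
      have : closure (OrderDual.ofDual '' c : Set X) ⊆ S := by
        apply closure_minimal _ hScl
        rintro z ⟨z', hz', rfl⟩; exact hcS hz'
      exact this hacl
    exact ⟨OrderDual.toDual a, haS, fun z hz => haglb.1 ⟨z, hz, rfl⟩⟩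
  obtain ⟨m, -, hmS, hmax⟩ := hz
  -- m is minimal in S; subsemilattice property upgrades it to a minimum
  refine ⟨OrderDual.ofDual m, hmS, fun s hs => ?_⟩
  have h1 : (OrderDual.ofDual m) ⊓ s ∈ S := hSsub _ hmS _ hs
  have h2 : m ≤ OrderDual.toDual ((OrderDual.ofDual m) ⊓ s) := inf_le_left
  have h3 := hmax h1 h2
  calc OrderDual.ofDual m = (OrderDual.ofDual m) ⊓ s := le_antisymm h3 inf_le_left
    _ ≤ s := inf_le_right
end Aux2

section Aux3
set_option linter.unusedSectionVars false
variable {X : Type*} [SemilatticeInf X] [TopologicalSpace X]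

lemma mainZorn (hud : ∀ x : X, IsClosed (Set.Ici x) ∧ IsClosed (Set.Iic x))
    (hc : ∀ C : Set X, C.Nonempty → IsChain (· ≤ ·) C →
      (∃ a : X, IsGLB C a ∧ a ∈ closure C) ∧ (∃ b : X, IsLUB C b ∧ b ∈ closure C))
    (M : Set (Set X)) (hMne : M.Nonempty)
    (hmem : ∀ S ∈ M, S.Nonempty ∧ IsClosed S ∧ ∀ a ∈ S, ∀ b ∈ S, a ⊓ b ∈ S)
    (hint : ∀ S ∈ M, ∀ T ∈ M, S ∩ T ∈ M) :
    ∃ x : X, ∀ S ∈ M, x ∈ S := by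
  -- minimum of S ∩ Ici b whenever nonempty
  have minS : ∀ S ∈ M, ∀ b : X, (S ∩ Ici b).Nonempty →
      ∃ m ∈ S ∩ Ici b, ∀ s ∈ S ∩ Ici b, m ≤ s := by
    intro S hS b hne
    obtain ⟨-, hScl, hSsub⟩ := hmem S hS
    refine exists_min' hc hne (hScl.inter (hud b).1) ?_
    rintro a ⟨haS, hab⟩ a' ⟨ha'S, ha'b⟩
    exact ⟨hSsub a haS a' ha'S, le_inf hab ha'b⟩
  set B : Set X := {b : X | ∀ S ∈ M, (S ∩ Ici b).Nonempty} with hB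
  -- B is nonempty
  obtain ⟨S₀, hS₀⟩ := hMne
  obtain ⟨m₀, hm₀S, hm₀min⟩ :=
    exists_min' hc (hmem S₀ hS₀).1 (hmem S₀ hS₀).2.1 (hmem S₀ hS₀).2.2
  have hm₀B : m₀ ∈ B := by
    intro T hT
    obtain ⟨u, huS, huT⟩ := (hmem _ (hint S₀ hS₀ T hT)).1
    exact ⟨u, huT, hm₀min u huS⟩
  -- Zorn on B
  have ih : ∀ c ⊆ B, IsChain (· ≤ ·) c → ∀ y ∈ c, ∃ ub ∈ B, ∀ z ∈ c, z ≤ ub := by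
    intro c hcB hchain y hy
    obtain ⟨-, b, hblub, -⟩ := hc c ⟨y, hy⟩ hchain
    refine ⟨b, ?_, fun z hz => hblub.1 hz⟩
    intro S hS
    have hf : ∀ x ∈ c, ∃ m, m ∈ S ∩ Ici x ∧ ∀ s ∈ S ∩ Ici x, m ≤ s :=
      fun x hx => minS S hS x (hcB hx S hS)
    choose! f hf1 hf2 using hf
    have hGchain : IsChain (· ≤ ·) {z : X | ∃ x ∈ c, z = f x} := by
      rintro _ ⟨x, hx, rfl⟩ _ ⟨x', hx', rfl⟩ hne
      rcases hchain.total hx hx' with h | h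
      · exact Or.inl (hf2 x hx _ ⟨(hf1 x' hx').1, le_trans h (hf1 x' hx').2⟩)
      · exact Or.inr (hf2 x' hx' _ ⟨(hf1 x hx).1, le_trans h (hf1 x hx).2⟩)
    have hGne : {z : X | ∃ x ∈ c, z = f x}.Nonempty := ⟨f y, y, hy, rfl⟩
    obtain ⟨-, t, htlub, htcl⟩ := hc _ hGne hGchain
    have hGS : {z : X | ∃ x ∈ c, z = f x} ⊆ S := by
      rintro _ ⟨x, hx, rfl⟩; exact (hf1 x hx).1
    have htS : t ∈ S := closure_minimal hGS (hmem S hS).2.1 htcl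
    have htb : b ≤ t :=
      hblub.2 (fun x hx => le_trans (hf1 x hx).2 (htlub.1 ⟨x, hx, rfl⟩))
    exact ⟨t, htS, htb⟩
  obtain ⟨m, -, hmB, hmax⟩ := zorn_le_nonempty₀ B ih m₀ hm₀B
  -- maximal element of B belongs to every member of M
  refine ⟨m, fun S hS => ?_⟩
  obtain ⟨m', ⟨hm'S, hmm'⟩, hm'min⟩ := minS S hS m (hmB S hS)
  have hm'B : m' ∈ B := by
    intro T hT
    obtain ⟨u, ⟨⟨huS, huT⟩, hmu⟩, -⟩ := minS _ (hint S hS T hT) m (hmB _ (hint S hS T hT))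
    exact ⟨u, huT, hm'min u ⟨huS, hmu⟩⟩
  have : m' ≤ m := hmax hm'B hmm'
  have : m' = m := le_antisymm this hmm'
  rwa [← this]
end Aux3

section Aux4
set_option linter.unusedSectionVars false
variable {X : Type*} [SemilatticeInf X] [TopologicalSpace X]

lemma zar_closed {S : Set X} (h1 : IsClosed S) (h2 : ∀ a ∈ S, ∀ b ∈ S, a ⊓ b ∈ S) :
    @IsClosed X (zarTop X) S := by
  rw [← @isOpen_compl_iff X S (zarTop X)]
  exact TopologicalSpace.GenerateOpen.basic _ ⟨S, h1, h2, rfl⟩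

lemma glb_aux {C K : Set X} (hC : C.Nonempty) (hch : IsChain (· ≤ ·) C) (hCK : C ⊆ K)
    (hKcomp : IsCompact K) (hKc : IsClosed K) (hIic : ∀ c : X, IsClosed (Iic c)) :
    ∃ a ∈ K, ∀ c ∈ C, a ≤ c := by
  have hne : Nonempty C := hC.to_subtype
  have h := IsCompact.nonempty_iInter_of_directed_nonempty_isCompact_isClosed
    (fun c : C => K ∩ Iic (c : X)) ?_ ?_ ?_ ?_
  · obtain ⟨a, ha⟩ := h
    simp only [mem_iInter, mem_inter_iff] at ha
    obtain ⟨c₀, hc₀⟩ := hC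
    exact ⟨a, (ha ⟨c₀, hc₀⟩).1, fun c hc => (ha ⟨c, hc⟩).2⟩
  · rintro ⟨c, hc⟩ ⟨d, hd⟩
    rcases hch.total hc hd with h | h
    · exact ⟨⟨c, hc⟩, Subset.rfl, inter_subset_inter_right K (Iic_subset_Iic.mpr h)⟩
    · exact ⟨⟨d, hd⟩, inter_subset_inter_right K (Iic_subset_Iic.mpr h), Subset.rfl⟩
  · exact fun c => ⟨c, hCK c.2, le_refl _⟩
  · exact fun c => hKcomp.inter_right (hIic c)
  · exact fun c => hKc.inter (hIic c)

lemma lub_aux {C K : Set X} (hC : C.Nonempty) (hch : IsChain (· ≤ ·) C) (hCK : C ⊆ K)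
    (hKcomp : IsCompact K) (hKc : IsClosed K) (hIci : ∀ c : X, IsClosed (Ici c)) :
    ∃ a ∈ K, ∀ c ∈ C, c ≤ a := by
  have hne : Nonempty C := hC.to_subtype
  have h := IsCompact.nonempty_iInter_of_directed_nonempty_isCompact_isClosed
    (fun c : C => K ∩ Ici (c : X)) ?_ ?_ ?_ ?_
  · obtain ⟨a, ha⟩ := h
    simp only [mem_iInter, mem_inter_iff] at ha
    obtain ⟨c₀, hc₀⟩ := hC
    exact ⟨a, (ha ⟨c₀, hc₀⟩).1, fun c hc => (ha ⟨c, hc⟩).2⟩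
  · rintro ⟨c, hc⟩ ⟨d, hd⟩
    rcases hch.total hc hd with h | h
    · exact ⟨⟨d, hd⟩, inter_subset_inter_right K (Ici_subset_Ici.mpr h), Subset.rfl⟩
    · exact ⟨⟨c, hc⟩, Subset.rfl, inter_subset_inter_right K (Ici_subset_Ici.mpr h)⟩
  · exact fun c => ⟨c, hCK c.2, le_refl _⟩
  · exact fun c => hKcomp.inter_right (hIci c)
  · exact fun c => hKc.inter (hIci c)

/-- completeness at a chain, given that its closure is a chain with the two bounds found. -/
lemma complete_of_compact_closure (hud : ∀ x : X, IsClosed (Set.Ici x) ∧ IsClosed (Set.Iic x))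
    {C : Set X} (hC : C.Nonempty) (hch : IsChain (· ≤ ·) C)
    (hglb : ∃ a ∈ closure C, ∀ c ∈ C, a ≤ c) (hlub : ∃ b ∈ closure C, ∀ c ∈ C, c ≤ b) :
    (∃ a : X, IsGLB C a ∧ a ∈ closure C) ∧ (∃ b : X, IsLUB C b ∧ b ∈ closure C) := by
  constructor
  · obtain ⟨a, haK, halb⟩ := hglb
    refine ⟨a, ⟨halb, fun b hb => ?_⟩, haK⟩
    exact closure_minimal (fun c hc => hb hc) (hud b).1 haK
  · obtain ⟨b, hbK, hbub⟩ := hlub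
    refine ⟨b, ⟨hbub, fun a ha => ?_⟩, hbK⟩
    exact closure_minimal (fun c hc => ha hc) (hud a).2 hbK
end Aux4

/-- For an ↑↓-closed topologized semilattice `X` the following are equivalent:
(1) `X` is complete; (2) `X` is Zar-compact; (3) `X` is chain-compact. -/
theorem stmt4 {X : Type*} [SemilatticeInf X] [TopologicalSpace X]
    (hud : ∀ x : X, IsClosed (Set.Ici x) ∧ IsClosed (Set.Iic x)) :
    List.TFAE
      [CompleteTS X,
       @CompactSpace X (zarTop X),
       ∀ C : Set X, IsClosed C → IsChain (· ≤ ·) C → IsCompact C] := by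
  tfae_have 1 → 2 := by
    intro hc
    refine @CompactSpace.mk X (zarTop X)
      ((@isCompact_iff_ultrafilter_le_nhds X (zarTop X) univ).mpr ?_)
    intro f _
    obtain ⟨x, hx⟩ := mainZorn hud hc
      {S : Set X | IsClosed S ∧ (∀ a ∈ S, ∀ b ∈ S, a ⊓ b ∈ S) ∧ S ∈ f}
      ⟨univ, isClosed_univ, fun _ _ _ _ => mem_univ _, Filter.univ_mem⟩
      (fun S hS => ⟨f.nonempty_of_mem hS.2.2, hS.1, hS.2.1⟩)
      (fun S hS T hT => ⟨hS.1.inter hT.1,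
        fun a ha b hb => ⟨hS.2.1 a ha.1 b hb.1, hT.2.1 a ha.2 b hb.2⟩,
        Filter.inter_mem hS.2.2 hT.2.2⟩)
    refine ⟨x, mem_univ x, ?_⟩
    show (f : Filter X) ≤ @nhds X (zarTop X) x
    rw [show zarTop X = TopologicalSpace.generateFrom
        {U : Set X | ∃ S : Set X, IsClosed S ∧ (∀ a ∈ S, ∀ b ∈ S, a ⊓ b ∈ S) ∧ U = Sᶜ} from rfl,
      TopologicalSpace.nhds_generateFrom]
    refine le_iInf₂ fun s hs => ?_
    obtain ⟨hxs, S, hScl, hSsub, rfl⟩ := hs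
    rw [Filter.le_principal_iff]
    exact Ultrafilter.compl_mem_iff_notMem.mpr
      (fun hSf => hxs (hx S ⟨hScl, hSsub, hSf⟩))
  tfae_have 2 → 1 := by
    intro h2 C hCne hch
    have hK : IsChain (· ≤ ·) (closure C) := closure_chain_isChain hud hch
    have hKsub := chain_inf_mem hK
    have hKz : @IsClosed X (zarTop X) (closure C) := zar_closed isClosed_closure hKsub
    have hKcomp : @IsCompact X (zarTop X) (closure C) :=
      @IsClosed.isCompact X (zarTop X) _ h2 hKz
    have hIic : ∀ c : X, @IsClosed X (zarTop X) (Iic c) := fun c =>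
      zar_closed (hud c).2 (fun a ha _ _ => le_trans inf_le_left ha)
    have hIci : ∀ c : X, @IsClosed X (zarTop X) (Ici c) := fun c =>
      zar_closed (hud c).1 (fun a ha b hb => le_inf ha hb)
    obtain ⟨a, haK, halb⟩ :=
      @glb_aux X _ (zarTop X) C (closure C) hCne hch subset_closure hKcomp hKz hIic
    obtain ⟨b, hbK, hbub⟩ :=
      @lub_aux X _ (zarTop X) C (closure C) hCne hch subset_closure hKcomp hKz hIci
    exact complete_of_compact_closure hud hCne hch ⟨a, haK, halb⟩ ⟨b, hbK, hbub⟩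
  tfae_have 1 → 3 := by
    intro hc C hCcl hch
    classical
    rcases C.eq_empty_or_nonempty with rfl | hCne
    · exact isCompact_empty
    apply isCompact_of_finite_subfamily_closed
    intro ι Z hZcl hempty
    by_contra hfin
    push_neg at hfin
    have hmem : ∀ A ∈ {A : Set X | ∃ t : Finset ι, A = C ∩ ⋂ i ∈ t, Z i},
        A.Nonempty ∧ IsClosed A ∧ ∀ a ∈ A, ∀ b ∈ A, a ⊓ b ∈ A := by
      rintro A ⟨t, rfl⟩
      refine ⟨hfin t,
        hCcl.inter (isClosed_biInter fun i _ => hZcl i), ?_⟩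
      intro a ha b hb
      rcases hch.total ha.1 hb.1 with h | h
      · rwa [inf_eq_left.mpr h]
      · rwa [inf_eq_right.mpr h]
    have hint : ∀ A ∈ {A : Set X | ∃ t : Finset ι, A = C ∩ ⋂ i ∈ t, Z i},
        ∀ B ∈ {A : Set X | ∃ t : Finset ι, A = C ∩ ⋂ i ∈ t, Z i},
        A ∩ B ∈ {A : Set X | ∃ t : Finset ι, A = C ∩ ⋂ i ∈ t, Z i} := by
      rintro A ⟨t, rfl⟩ B ⟨t', rfl⟩
      refine ⟨t ∪ t', ?_⟩
      ext x
      simp only [mem_inter_iff, mem_iInter, Finset.mem_union]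
      constructor
      · rintro ⟨⟨h1, h2⟩, -, h3⟩
        exact ⟨h1, fun i hi => hi.elim (h2 i) (h3 i)⟩
      · rintro ⟨h1, h2⟩
        exact ⟨⟨h1, fun i hi => h2 i (Or.inl hi)⟩, h1, fun i hi => h2 i (Or.inr hi)⟩
    obtain ⟨x, hx⟩ := mainZorn hud hc
      {A : Set X | ∃ t : Finset ι, A = C ∩ ⋂ i ∈ t, Z i}
      ⟨C ∩ ⋂ i ∈ (∅ : Finset ι), Z i, ∅, rfl⟩ hmem hint
    have hxC : x ∈ C := by
      have := hx _ ⟨∅, rfl⟩; simpa using this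
    have hxZ : ∀ i, x ∈ Z i := by
      intro i
      have := hx _ ⟨{i}, rfl⟩
      simp only [Finset.mem_singleton, mem_inter_iff, mem_iInter] at this
      exact this.2 i rfl
    have hmem' : x ∈ C ∩ ⋂ i, Z i := ⟨hxC, mem_iInter.mpr hxZ⟩
    rw [hempty] at hmem'
    exact hmem'
  tfae_have 3 → 1 := by
    intro h3 C hCne hch
    have hK : IsChain (· ≤ ·) (closure C) := closure_chain_isChain hud hch
    have hKcomp : IsCompact (closure C) := h3 _ isClosed_closure hK
    obtain ⟨a, haK, halb⟩ :=
      glb_aux hCne hch subset_closure hKcomp isClosed_closure (fun c => (hud c).2)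
    obtain ⟨b, hbK, hbub⟩ :=
      lub_aux hCne hch subset_closure hKcomp isClosed_closure (fun c => (hud c).1)
    exact complete_of_compact_closure hud hCne hch ⟨a, haK, halb⟩ ⟨b, hbK, hbub⟩
  tfae_finish
end

section
/- For a meet-semilattice X the following conditions are equivalent: (1) X is meet continuous; (2) X endowed with the Scott topology is a semitopological semilattice; (3) X endowed with the Lawson topology is a semitopological semilattice. -/
open Set TopologicalSpace

variable (X : Type*)

/-- The Scott topology: the topology whose open sets are the Scott-open sets. -/
def scottTop [Preorder X] : TopologicalSpace X :=
  TopologicalSpace.generateFrom {U : Set X | ScottOpen X U}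

/-- A meet-semilattice is meet continuous if for every nonempty up-directed set `D` having
a supremum `s` and every `a`, the set `a ⊓ D` has supremum `a ⊓ s`. -/
def MeetContinuous [SemilatticeInf X] : Prop :=
  ∀ D : Set X, D.Nonempty → DirectedOn (· ≤ ·) D → ∀ s : X, IsLUB D s →
    ∀ a : X, IsLUB ((fun d => a ⊓ d) '' D) (a ⊓ s)

section Aux

variable {X : Type*} [SemilatticeInf X]

lemma scottOpen_of_isOpen {U : Set X} (h : @IsOpen X (scottTop X) U) : ScottOpen X U := by
  unfold scottTop at h
  induction h with
  | basic U hU => exact hU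
  | univ => exact ⟨fun _ _ _ _ => trivial,
      fun D ⟨d, hd⟩ _ a _ _ => ⟨d, hd, trivial⟩⟩
  | inter U V hU hV ihU ihV =>
    refine ⟨ihU.1.inter ihV.1, fun D hne hdir a ha haUV => ?_⟩
    obtain ⟨d1, hd1D, hd1U⟩ := ihU.2 D hne hdir a ha haUV.1
    obtain ⟨d2, hd2D, hd2V⟩ := ihV.2 D hne hdir a ha haUV.2
    obtain ⟨d, hdD, h1, h2⟩ := hdir d1 hd1D d2 hd2D
    exact ⟨d, hdD, ihU.1 h1 hd1U, ihV.1 h2 hd2V⟩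
  | sUnion S hS ih =>
    refine ⟨fun x y hxy hx => ?_, fun D hne hdir a ha haS => ?_⟩
    · obtain ⟨U, hUS, hxU⟩ := hx
      exact ⟨U, hUS, (ih U hUS).1 hxy hxU⟩
    · obtain ⟨U, hUS, haU⟩ := haS
      obtain ⟨d, hdD, hdU⟩ := (ih U hUS).2 D hne hdir a ha haU
      exact ⟨d, hdD, U, hUS, hdU⟩

lemma iic_compl_scottOpen (u : X) : ScottOpen X (Set.Iic u)ᶜ := by
  refine ⟨fun x y hxy hx hy => hx (hxy.trans hy), fun D hne hdir a ha haU => ?_⟩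
  by_contra h
  refine haU (ha.2 fun d hd => ?_)
  by_contra hdu
  exact h ⟨d, hd, hdu⟩

lemma lawson_tail {V : Set X} (h : @IsOpen X (lawsonTop X) V) {D : Set X}
    (hne : D.Nonempty) (hdir : DirectedOn (· ≤ ·) D) {s : X} (hs : IsLUB D s) :
    s ∈ V → ∃ d ∈ D, ∀ d' ∈ D, d ≤ d' → d' ∈ V := by
  unfold lawsonTop at h
  induction h with
  | basic U hU =>
    intro hsV
    rcases hU with hU | ⟨x, rfl⟩
    · obtain ⟨d, hdD, hdU⟩ := hU.2 D hne hdir s hs hsV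
      exact ⟨d, hdD, fun d' _ hle => hU.1 hle hdU⟩
    · obtain ⟨d, hd⟩ := hne
      exact ⟨d, hd, fun d' hd' _ hx => hsV (hx.trans (hs.1 hd'))⟩
  | univ =>
    intro _
    obtain ⟨d, hd⟩ := hne
    exact ⟨d, hd, fun _ _ _ => trivial⟩
  | inter U V hU hV ihU ihV =>
    intro hsV
    obtain ⟨d1, hd1, h1⟩ := ihU hsV.1
    obtain ⟨d2, hd2, h2⟩ := ihV hsV.2
    obtain ⟨d, hdD, l1, l2⟩ := hdir d1 hd1 d2 hd2
    exact ⟨d, hdD, fun d' hd' hle => ⟨h1 d' hd' (l1.trans hle), h2 d' hd' (l2.trans hle)⟩⟩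
  | sUnion S hS ih =>
    intro hsV
    obtain ⟨U, hUS, hsU⟩ := hsV
    obtain ⟨d, hdD, hd⟩ := ih U hUS hsU
    exact ⟨d, hdD, fun d' h1 h2 => ⟨U, hUS, hd d' h1 h2⟩⟩

lemma preimage_scottOpen (mc : MeetContinuous X) (a : X) {U : Set X}
    (hU : ScottOpen X U) : ScottOpen X ((fun x => a ⊓ x) ⁻¹' U) := by
  constructor
  · intro x y hxy hx
    exact hU.1 (inf_le_inf_left a hxy) hx
  · intro D hne hdir s hs hsU
    have hdir2 : DirectedOn (· ≤ ·) ((fun d => a ⊓ d) '' D) := by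
      rintro _ ⟨d1, hd1, rfl⟩ _ ⟨d2, hd2, rfl⟩
      obtain ⟨d, hdD, h1, h2⟩ := hdir d1 hd1 d2 hd2
      exact ⟨a ⊓ d, ⟨d, hdD, rfl⟩, inf_le_inf_left a h1, inf_le_inf_left a h2⟩
    obtain ⟨_, ⟨d, hdD, rfl⟩, hdU⟩ :=
      hU.2 _ (hne.image _) hdir2 (a ⊓ s) (mc D hne hdir s hs a) hsU
    exact ⟨d, hdD, hdU⟩

end Aux

/-- For a meet-semilattice `X` the following are equivalent:
(1) `X` is meet continuous; (2) `X` with the Scott topology is a semitopological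
semilattice; (3) `X` with the Lawson topology is a semitopological semilattice. -/
theorem stmt8 {X : Type*} [SemilatticeInf X] :
    List.TFAE
      [MeetContinuous X,
       ∀ a : X, @Continuous X X (scottTop X) (scottTop X) (fun x => a ⊓ x),
       ∀ a : X, @Continuous X X (lawsonTop X) (lawsonTop X) (fun x => a ⊓ x)] := by
  tfae_have 1 → 2
  · intro mc a
    unfold scottTop
    rw [continuous_generateFrom_iff]
    intro U hU
    exact TopologicalSpace.isOpen_generateFrom_of_mem (preimage_scottOpen mc a hU)
  tfae_have 2 → 3
  · intro h2 a
    unfold lawsonTop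
    rw [continuous_generateFrom_iff]
    rintro U (hU | ⟨y, rfl⟩)
    · have hpre : @IsOpen X (scottTop X) ((fun x => a ⊓ x) ⁻¹' U) :=
        @Continuous.isOpen_preimage X X (scottTop X) (scottTop X) _ (h2 a) U
          (TopologicalSpace.isOpen_generateFrom_of_mem hU)
      exact TopologicalSpace.isOpen_generateFrom_of_mem
        (Or.inl (scottOpen_of_isOpen hpre))
    · by_cases hya : y ≤ a
      · have : (fun x => a ⊓ x) ⁻¹' (Set.Ici y)ᶜ = (Set.Ici y)ᶜ := by
          ext x
          simp only [Set.mem_preimage, Set.mem_compl_iff, Set.mem_Ici, le_inf_iff]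
          tauto
        rw [this]
        exact TopologicalSpace.isOpen_generateFrom_of_mem (Or.inr ⟨y, rfl⟩)
      · have : (fun x => a ⊓ x) ⁻¹' (Set.Ici y)ᶜ = Set.univ := by
          ext x
          simp only [Set.mem_preimage, Set.mem_compl_iff, Set.mem_Ici, le_inf_iff,
            Set.mem_univ, iff_true]
          tauto
        rw [this]
        exact TopologicalSpace.GenerateOpen.univ
  tfae_have 3 → 1
  · intro h3 D hne hdir s hs a
    constructor
    · rintro _ ⟨d, hdD, rfl⟩
      exact inf_le_inf_left a (hs.1 hdD)
    · intro u hu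
      by_contra hns
      have hVopen : @IsOpen X (lawsonTop X) ((fun x => a ⊓ x) ⁻¹' (Set.Iic u)ᶜ) :=
        @Continuous.isOpen_preimage X X (lawsonTop X) (lawsonTop X) _ (h3 a) _
          (TopologicalSpace.isOpen_generateFrom_of_mem (Or.inl (iic_compl_scottOpen u)))
      obtain ⟨d, hdD, hd⟩ := lawson_tail hVopen hne hdir hs hns
      exact hd d hdD le_rfl (hu ⟨d, hdD, rfl⟩)
  tfae_finish
end

section
/- Let X be a complete meet-semilattice whose Lawson topology Λ_X is Hausdorff. Then the following are equivalent: (1) X is meet continuous; (2) X endowed with the Lawson topology is a compact topological semilattice; (3) X endowed with the Scott topology is a compact topological semilattice. -/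
open Set TopologicalSpace

variable (X : Type*)

/-!
Chain-completeness already yields suprema of nonempty directed sets (a directed set of
uncountable cardinality is the union of a chain of directed subsets of smaller cardinality) and
hence infima of nonempty sets. An ultrafilter `F` then converges in the Lawson topology to the
supremum of its lower limits `{inf S | S ∈ F}`, which gives compactness; in the Hausdorff case this
is its only limit, and meet continuity identifies the lower limits of `F.map (· ⊓ ·)` on `X × X`,
which gives continuity of the meet. In a Lawson topological semilattice the upper closure of a
Lawson-open set is open, hence Scott-open, so the meet stays continuous for the Scott topology,
which is compact because the only Scott-open set containing the bottom element is `X`. Finally, a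
meet that is Scott continuous preserves directed suprema, which is meet continuity.
-/

open Topology Cardinal

section Topologies
variable {X : Type*} [Preorder X]

theorem scottTop_eq_scott : scottTop X = Topology.scott X univ := by
  let := Topology.scott X univ
  have : IsScott X univ := ⟨rfl⟩
  rw [← generateFrom_setOfPred_isOpen (scott X univ), scottTop]
  congr 1; ext U
  exact (IsScott.isOpen_iff_isUpperSet_and_dirSupInaccOn (D := univ).trans
    (and_congr_right' (dirSupInaccOn_univ (α := X)))).symm

theorem lawsonTop_eq_lawson : lawsonTop X = Topology.lawson X := by
  rw [lawsonTop, generateFrom_union, ← scottTop.eq_def X, scottTop_eq_scott, Topology.lawson,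
    inf_comm]
  unfold Topology.lower
  simp only [eq_comm]

theorem isScott_scottTop : @IsScott X univ _ (scottTop X) :=
  @IsScott.mk _ _ _ (scottTop X) scottTop_eq_scott

theorem isLawson_lawsonTop : @IsLawson X _ (lawsonTop X) :=
  @IsLawson.mk _ _ (lawsonTop X) lawsonTop_eq_lawson

end Topologies

section BinaryClosure
variable {α : Type*} (f : α → α → α)

def binClosure (B : Set α) : Set α :=
  ⋃ n, (fun S => S ∪ image2 f S S)^[n] B

variable {f}

theorem monotone_iterate_binClosure (B : Set α) :
    Monotone fun n => (fun S => S ∪ image2 f S S)^[n] B :=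
  monotone_nat_of_le_succ fun n => by
    simp only [Function.iterate_succ_apply']
    exact subset_union_left

theorem subset_binClosure (B : Set α) : B ⊆ binClosure f B :=
  subset_iUnion_of_subset 0 subset_rfl

theorem binClosure_closed {B : Set α} {x y : α} (hx : x ∈ binClosure f B)
    (hy : y ∈ binClosure f B) : f x y ∈ binClosure f B := by
  obtain ⟨m, hm⟩ := mem_iUnion.1 hx
  obtain ⟨n, hn⟩ := mem_iUnion.1 hy
  refine mem_iUnion.2 ⟨max m n + 1, ?_⟩
  rw [Function.iterate_succ_apply']
  exact Or.inr (mem_image2_of_mem (monotone_iterate_binClosure B (le_max_left m n) hm)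
    (monotone_iterate_binClosure B (le_max_right m n) hn))

theorem binClosure_subset {B D : Set α} (hB : B ⊆ D) (hD : ∀ x ∈ D, ∀ y ∈ D, f x y ∈ D) :
    binClosure f B ⊆ D := by
  refine iUnion_subset fun n => ?_
  induction n with
  | zero => exact hB
  | succ n ih =>
    rw [Function.iterate_succ_apply']
    rintro _ (hx | ⟨x, hx, y, hy, rfl⟩)
    exacts [ih hx, hD x (ih hx) y (ih hy)]

theorem mk_binClosure_le (B : Set α) : #(binClosure f B) ≤ max #B ℵ₀ := by
  set κ := max #B ℵ₀
  have hκ : ℵ₀ ≤ κ := le_max_right _ _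
  have hstep : ∀ n, #((fun S => S ∪ image2 f S S)^[n] B) ≤ κ := by
    intro n
    induction n with
    | zero => exact le_max_left _ _
    | succ n ih =>
      rw [Function.iterate_succ_apply']
      calc _ ≤ κ + κ * κ := (mk_union_le _ _).trans (add_le_add ih (mk_image2_le.trans
              (mul_le_mul' ih ih)))
        _ = κ := by rw [mul_eq_self hκ, add_eq_self hκ]
  have := mk_iUnion_le_lift.{_, 0} fun n => (fun S => S ∪ image2 f S S)^[n] B
  simp only [lift_uzero, mk_nat, lift_aleph0] at this
  exact this.trans ((mul_le_mul' hκ (ciSup_le' fun n => by simpa using hstep n)).trans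
    (mul_eq_self hκ).le)

end BinaryClosure

section DirectedSups
variable {α : Type*} [Preorder α]

theorem exists_isLUB_iUnion_of_monotone
    (hc : ∀ C : Set α, C.Nonempty → IsChain (· ≤ ·) C → ∃ b, IsLUB C b)
    {ι : Type*} [LinearOrder ι] [Nonempty ι] {E : ι → Set α} (hE : Monotone E) {s : ι → α}
    (hs : ∀ i, IsLUB (E i) (s i)) :
    ∃ b, IsLUB (⋃ i, E i) b := by
  have hsmono : Monotone s := fun i j hij => (hs i).mono (hs j) (hE hij)
  obtain ⟨b, hb⟩ := hc (range s) (range_nonempty s) hsmono.isChain_range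
  exact ⟨b, (isLUB_iUnion_iff_of_isLUB hs b).1 hb⟩

theorem DirectedOn.exists_isLUB_of_countable
    (hc : ∀ C : Set α, C.Nonempty → IsChain (· ≤ ·) C → ∃ b, IsLUB C b)
    {D : Set α} (hD : DirectedOn (· ≤ ·) D) (hne : D.Nonempty) (hcount : D.Countable) :
    ∃ b, IsLUB D b := by
  have := hcount.toEncodable
  let _ : Inhabited D := ⟨⟨_, hne.some_mem⟩⟩
  have hdir : Directed (· ≤ ·) ((↑) : D → α) := directedOn_iff_directed.1 hD
  let g : ℕ → α := fun n => hdir.sequence _ n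
  have hcover : D = ⋃ n, D ∩ Iic (g n) := by
    refine Subset.antisymm (fun d hd => ?_) (iUnion_subset fun _ => inter_subset_left)
    exact mem_iUnion.2 ⟨_, hd, hdir.le_sequence ⟨d, hd⟩⟩
  rw [hcover]
  refine exists_isLUB_iUnion_of_monotone hc (s := g)
    (fun m n hmn => inter_subset_inter_right _ (Iic_subset_Iic.2 (hdir.sequence_mono hmn)))
    fun n => IsGreatest.isLUB ⟨⟨(hdir.sequence _ n).2, le_rfl⟩, fun _ hx => hx.2⟩

theorem DirectedOn.exists_monotone_directed_hull {D : Set α} (hD : DirectedOn (· ≤ ·) D) :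
    ∃ H : Set D → Set α, Monotone H ∧ ∀ B, (↑) '' B ⊆ H B ∧ H B ⊆ D ∧
      DirectedOn (· ≤ ·) (H B) ∧ #(H B) ≤ max #B ℵ₀ := by
  have : ∀ x y : D, ∃ z : D, x ≤ z ∧ y ≤ z := fun x y => by
    obtain ⟨z, hz, hxz, hyz⟩ := hD x x.2 y y.2
    exact ⟨⟨z, hz⟩, hxz, hyz⟩
  choose u hu₁ hu₂ using this
  refine ⟨fun B => (↑) '' binClosure u B, fun B B' hB => image_mono <| binClosure_subset
    (hB.trans (subset_binClosure _)) fun _ hx _ hy => binClosure_closed hx hy,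
    fun B => ⟨image_mono (subset_binClosure B), ?_, ?_, mk_image_le.trans (mk_binClosure_le B)⟩⟩
  · rintro _ ⟨x, -, rfl⟩
    exact x.2
  · rintro _ ⟨x, hx, rfl⟩ _ ⟨y, hy, rfl⟩
    exact ⟨u x y, ⟨_, binClosure_closed hx hy, rfl⟩, hu₁ x y, hu₂ x y⟩

theorem DirectedOn.exists_isLUB_of_chains
    (hc : ∀ C : Set α, C.Nonempty → IsChain (· ≤ ·) C → ∃ b, IsLUB C b)
    {D : Set α} (hD : DirectedOn (· ≤ ·) D) (hne : D.Nonempty) : ∃ b, IsLUB D b := by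
  induction hκ : #D using WellFoundedLT.induction generalizing D with
  | _ κ ih =>
  subst hκ
  by_cases hcount : D.Countable
  · exact hD.exists_isLUB_of_countable hc hne hcount
  have hκ : ℵ₀ < #D := lt_of_not_ge (mt le_aleph0_iff_set_countable.1 hcount)
  obtain ⟨H, hHmono, hH⟩ := hD.exists_monotone_directed_hull
  -- Enumerate `D` along the initial ordinal of `#D`: initial segments are then smaller than `D`.
  let ι := (#D).ord.ToType
  have hι : #ι = #D := by rw [mk_toType, card_ord]
  have : Nonempty ι := mk_ne_zero_iff.1 (hι ▸ mk_ne_zero_iff.2 hne.to_subtype)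
  obtain ⟨e⟩ : Nonempty (ι ≃ D) := Cardinal.eq.1 hι
  let E : ι → Set α := fun i => H (e '' Iic i)
  have hsmall : ∀ i, #(E i) < #D := fun i => by
    refine (hH _).2.2.2.trans_lt (max_lt (mk_image_le.trans_lt ?_) hκ)
    rw [← Iio_insert]
    have hIio : #(Iio i) < #D := (mk_Iio_lt i (by rw [hι, Ordinal.type_toType])).trans_eq hι
    exact mk_insert_le.trans_lt (add_lt_of_lt hκ.le hIio (one_lt_aleph0.trans hκ))
  have hsup : ∀ i, ∃ s, IsLUB (E i) s := fun i =>
    ih _ (hsmall i) (hH _).2.2.1 (((nonempty_Iic.image e).image _).mono (hH _).1) rfl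
  choose s hs using hsup
  have hcover : D = ⋃ i, E i := by
    refine Subset.antisymm (fun d hd => mem_iUnion.2 ⟨e.symm ⟨d, hd⟩, (hH _).1 ?_⟩)
      (iUnion_subset fun i => (hH _).2.1)
    exact ⟨⟨d, hd⟩, ⟨_, self_mem_Iic, e.apply_symm_apply _⟩, rfl⟩
  rw [hcover]
  exact exists_isLUB_iUnion_of_monotone hc
    (fun i j hij => hHmono (image_mono (Iic_subset_Iic.2 hij))) hs

end DirectedSups

def ChainComplete (X : Type*) [Preorder X] : Prop :=
  ∀ C : Set X, C.Nonempty → IsChain (· ≤ ·) C → (∃ a, IsGLB C a) ∧ (∃ b, IsLUB C b)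

namespace ChainComplete

theorem exists_isLUB {X : Type*} [Preorder X] (hX : ChainComplete X) {D : Set X}
    (hD : DirectedOn (· ≤ ·) D) (hne : D.Nonempty) : ∃ b, IsLUB D b :=
  hD.exists_isLUB_of_chains (fun C hC hch => (hX C hC hch).2) hne

variable {X : Type*} [SemilatticeInf X] (hX : ChainComplete X)
include hX

theorem exists_isGLB {S : Set X} (hS : S.Nonempty) : ∃ a, IsGLB S a := by
  have hdual : ∀ C : Set Xᵒᵈ, C.Nonempty → IsChain (· ≤ ·) C → ∃ b, IsLUB C b :=
    fun C hC hch => (hX C hC hch.symm).1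
  have hdir : DirectedOn (· ≥ ·) (infClosure S) := infClosed_infClosure.codirectedOn
  have hne : (infClosure S).Nonempty := hS.mono subset_infClosure
  obtain ⟨a, ha⟩ := DirectedOn.exists_isLUB_of_chains (α := Xᵒᵈ) hdual hdir hne
  have ha : IsGLB (infClosure S) (OrderDual.ofDual a) := ha
  exact ⟨_, by rwa [IsGLB, lowerBounds_infClosure] at ha⟩

end ChainComplete

theorem MeetContinuous.isLUB_image2_inf {X : Type*} [SemilatticeInf X] (hmc : MeetContinuous X)
    {D E : Set X} {a b : X} (hD : DirectedOn (· ≤ ·) D) (hDne : D.Nonempty) (ha : IsLUB D a)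
    (hE : DirectedOn (· ≤ ·) E) (hEne : E.Nonempty) (hb : IsLUB E b) :
    IsLUB (image2 (· ⊓ ·) D E) (a ⊓ b) := by
  refine ⟨?_, fun u hu => ?_⟩
  · rintro _ ⟨x, hx, y, hy, rfl⟩
    exact inf_le_inf (ha.1 hx) (hb.1 hy)
  refine (isLUB_le_iff (hmc E hEne hE b hb a)).2 (forall_mem_image.2 fun y hy => ?_)
  rw [inf_comm]
  refine (isLUB_le_iff (hmc D hDne hD a ha y)).2 (forall_mem_image.2 fun x hx => ?_)
  rw [inf_comm]
  exact hu (mem_image2_of_mem hx hy)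

section LowerLimits
variable {X : Type*} [SemilatticeInf X]

def lowerLimits (F : Filter X) : Set X :=
  {x | ∃ S ∈ F, IsGLB S x}

namespace ChainComplete
variable (hX : ChainComplete X)
include hX

theorem nonempty_lowerLimits (F : Filter X) [F.NeBot] : (lowerLimits F).Nonempty :=
  let ⟨a, ha⟩ := hX.exists_isGLB (F.nonempty_of_mem Filter.univ_mem)
  ⟨a, univ, Filter.univ_mem, ha⟩

theorem directedOn_lowerLimits (F : Filter X) [F.NeBot] :
    DirectedOn (· ≤ ·) (lowerLimits F) := by
  rintro x ⟨S, hS, hx⟩ y ⟨T, hT, hy⟩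
  obtain ⟨z, hz⟩ := hX.exists_isGLB (Filter.nonempty_of_mem (Filter.inter_mem hS hT))
  exact ⟨z, ⟨_, Filter.inter_mem hS hT, hz⟩, hz.mono hx inter_subset_left,
    hz.mono hy inter_subset_right⟩

theorem exists_le_mem_lowerLimits_map {ι : Type*} {G : Filter ι} [G.NeBot] {f : ι → X} {A : Set ι}
    (hA : A ∈ G) {w : X} (hw : ∀ i ∈ A, w ≤ f i) : ∃ z ∈ lowerLimits (G.map f), w ≤ z := by
  obtain ⟨z, hz⟩ := hX.exists_isGLB ((G.nonempty_of_mem hA).image f)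
  exact ⟨z, ⟨_, Filter.image_mem_map hA, hz⟩, hz.2 (forall_mem_image.2 hw)⟩

end ChainComplete
end LowerLimits

section Lawson
variable {X : Type*} [SemilatticeInf X] [TopologicalSpace X] [IsLawson X]

theorem Topology.IsLawson.le_nhds_iff {F : Filter X} {c : X} :
    F ≤ 𝓝 c ↔ (∀ U, ScottOpen X U → c ∈ U → U ∈ F) ∧ ∀ y, ¬y ≤ c → (Ici y)ᶜ ∈ F := by
  rw [← Filter.tendsto_id', IsLawson.topology_eq_lawson (α := X), ← lawsonTop_eq_lawson, lawsonTop,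
    TopologicalSpace.tendsto_nhds_generateFrom_iff]
  simp [or_imp, forall_and]

namespace ChainComplete
variable (hX : ChainComplete X)
include hX

theorem exists_isLUB_lowerLimits_le_nhds (F : Ultrafilter X) :
    ∃ c, IsLUB (lowerLimits (F : Filter X)) c ∧ ↑F ≤ 𝓝 c := by
  have hne := hX.nonempty_lowerLimits F
  have hdir := hX.directedOn_lowerLimits F
  obtain ⟨c, hc⟩ := hX.exists_isLUB hdir hne
  refine ⟨c, hc, IsLawson.le_nhds_iff.2 ⟨fun U hU hcU => ?_, fun y hy => ?_⟩⟩
  · obtain ⟨d, ⟨S, hS, hd⟩, hdU⟩ := hU.2 _ hne hdir c hc hcU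
    exact Filter.mem_of_superset hS fun x hx => hU.1 (hd.1 hx) hdU
  · exact Ultrafilter.compl_mem_iff_notMem.2 fun h => hy (hc.1 ⟨_, h, isGLB_Ici⟩)

theorem compactSpace_of_isLawson : CompactSpace X :=
  ⟨isCompact_iff_ultrafilter_le_nhds.2 fun F _ =>
    let ⟨c, _, hc⟩ := hX.exists_isLUB_lowerLimits_le_nhds F
    ⟨c, trivial, hc⟩⟩

theorem isLUB_lowerLimits_of_le_nhds [T2Space X] {F : Ultrafilter X} {x : X} (hx : ↑F ≤ 𝓝 x) :
    IsLUB (lowerLimits (F : Filter X)) x := by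
  obtain ⟨c, hc, hFc⟩ := hX.exists_isLUB_lowerLimits_le_nhds F
  rwa [tendsto_nhds_unique (f := id) hx hFc]

end ChainComplete

theorem ChainComplete.continuousInf_of_isLawson [T2Space X] (hX : ChainComplete X)
    (hmc : MeetContinuous X) : ContinuousInf X := by
  refine ⟨continuous_iff_ultrafilter.2 fun ⟨a, b⟩ G hG => ?_⟩
  obtain ⟨c, hc, hGc⟩ := hX.exists_isLUB_lowerLimits_le_nhds (G.map fun p => p.1 ⊓ p.2)
  have ha := hX.isLUB_lowerLimits_of_le_nhds (F := G.map Prod.fst)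
    ((continuous_fst.tendsto (a, b)).mono_left hG)
  have hb := hX.isLUB_lowerLimits_of_le_nhds (F := G.map Prod.snd)
    ((continuous_snd.tendsto (a, b)).mono_left hG)
  suffices c = a ⊓ b from this ▸ hGc
  refine le_antisymm (hc.2 fun y ⟨T, hT, hy⟩ => le_inf ?_ ?_) ((MeetContinuous.isLUB_image2_inf hmc
    (hX.directedOn_lowerLimits _) (hX.nonempty_lowerLimits _) ha
    (hX.directedOn_lowerLimits _) (hX.nonempty_lowerLimits _) hb).2 ?_)
  · obtain ⟨z, hz, hyz⟩ := hX.exists_le_mem_lowerLimits_map (f := Prod.fst) hT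
      fun p hp => (hy.1 hp).trans inf_le_left
    exact hyz.trans (ha.1 hz)
  · obtain ⟨z, hz, hyz⟩ := hX.exists_le_mem_lowerLimits_map (f := Prod.snd) hT
      fun p hp => (hy.1 hp).trans inf_le_right
    exact hyz.trans (hb.1 hz)
  · rintro _ ⟨x, ⟨S, hS, hx⟩, y, ⟨T, hT, hy⟩, rfl⟩
    obtain ⟨z, hz, hxyz⟩ := hX.exists_le_mem_lowerLimits_map
      (Filter.inter_mem (Ultrafilter.mem_map.1 hS) (Ultrafilter.mem_map.1 hT))
      fun p hp => inf_le_inf (hx.1 hp.1) (hy.1 hp.2)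
    exact hxyz.trans (hc.1 hz)

end Lawson

theorem ContinuousInf.isOpen_upperClosure {X : Type*} [SemilatticeInf X] [TopologicalSpace X]
    [ContinuousInf X] {V : Set X} (hV : IsOpen V) : IsOpen (upperClosure V : Set X) := by
  refine isOpen_iff_mem_nhds.2 ?_
  rintro x ⟨v, hv, hvx⟩
  have hcont : Filter.Tendsto (v ⊓ ·) (𝓝 x) (𝓝 (v ⊓ x)) :=
    (continuous_const.inf continuous_id).tendsto x
  rw [inf_eq_left.2 hvx] at hcont
  filter_upwards [hcont (hV.mem_nhds hv)] with y hy using ⟨v ⊓ y, hy, inf_le_right⟩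

section Scott
variable {X : Type*} [SemilatticeInf X]

theorem ChainComplete.compactSpace_of_isScott [TopologicalSpace X] [IsScott X univ]
    (hX : ChainComplete X) : CompactSpace X := by
  rcases isEmpty_or_nonempty X with _ | _
  · infer_instance
  obtain ⟨b, hb⟩ := hX.exists_isGLB univ_nonempty
  refine ⟨isCompact_iff_ultrafilter_le_nhds.2 fun F _ => ⟨b, trivial, le_nhds_iff.2 ?_⟩⟩
  intro U hbU hU
  exact Filter.univ_mem' fun x => IsScott.isUpperSet_of_isOpen (D := univ) hU (hb.1 trivial) hbU

theorem continuousInf_scott_of_continuousInf_lawson (L S : TopologicalSpace X) [@IsLawson X _ L]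
    [@IsScott X univ _ S] [@ContinuousInf X L _] : @ContinuousInf X S _ := by
  have isOpen_upperClosure {V : Set X} (hV : IsOpen[L] V) : IsOpen[S] (upperClosure V) :=
    (lawsonOpen_iff_scottOpen_of_isUpperSet' L S _ (upperClosure V).upper).1
      (@ContinuousInf.isOpen_upperClosure X _ L _ _ hV)
  have hnhds : ∀ U : Set X, IsOpen U → ∀ a b, a ⊓ b ∈ U → ∃ V W : Set X, IsOpen V ∧ IsOpen W ∧
      a ∈ V ∧ b ∈ W ∧ ∀ x ∈ V, ∀ y ∈ W, x ⊓ y ∈ U := by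
    intro U hU a b hab
    have hUup : IsUpperSet U := IsScott.isUpperSet_of_isOpen (D := univ) hU
    let := L
    obtain ⟨V, W, hV, hW, ha, hb, hVW⟩ :=
      isOpen_prod_iff.1 ((isLawson_le_isScott L S U hU).preimage continuous_inf) a b hab
    refine ⟨_, _, isOpen_upperClosure hV, isOpen_upperClosure hW, subset_upperClosure ha,
      subset_upperClosure hb, ?_⟩
    rintro x ⟨v, hv, hvx⟩ y ⟨w, hw, hwy⟩
    exact hUup (inf_le_inf hvx hwy) (hVW (mk_mem_prod hv hw) : v ⊓ w ∈ U)
  refine ⟨continuous_def.2 fun U hU => isOpen_prod_iff.2 fun a b hab => ?_⟩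
  obtain ⟨V, W, hV, hW, ha, hb, hVW⟩ := hnhds U hU a b hab
  exact ⟨V, W, hV, hW, ha, hb, fun p hp => hVW _ hp.1 _ hp.2⟩

theorem meetContinuous_of_isScott [TopologicalSpace X] [IsScott X univ] [ContinuousInf X] :
    MeetContinuous X := fun _ hne hD _ hs _ =>
  scottContinuousOn_univ.1 ((IsScott.scottContinuousOn_iff_continuous (D := univ)
    fun _ _ _ => trivial).2 (continuous_const.inf continuous_id)) hne hD hs

end Scott

/-- Let `X` be a complete meet-semilattice whose Lawson topology is Hausdorff.
Then the following are equivalent: (1) `X` is meet continuous; (2) `X` with the Lawson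
topology is a compact topological semilattice; (3) `X` with the Scott topology is a compact
topological semilattice. -/
theorem stmt9 {X : Type*} [SemilatticeInf X]
    (hcomp : ∀ C : Set X, C.Nonempty → IsChain (· ≤ ·) C →
      (∃ a : X, IsGLB C a) ∧ (∃ b : X, IsLUB C b))
    (hT2 : @T2Space X (lawsonTop X)) :
    List.TFAE
      [MeetContinuous X,
       @CompactSpace X (lawsonTop X) ∧
         @Continuous (X × X) X (@instTopologicalSpaceProd X X (lawsonTop X) (lawsonTop X))
           (lawsonTop X) (fun p => p.1 ⊓ p.2),
       @CompactSpace X (scottTop X) ∧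
         @Continuous (X × X) X (@instTopologicalSpaceProd X X (scottTop X) (scottTop X))
           (scottTop X) (fun p => p.1 ⊓ p.2)] := by
  have hX : ChainComplete X := hcomp
  have := isLawson_lawsonTop (X := X)
  have := isScott_scottTop (X := X)
  tfae_have 1 → 2 := fun hmc =>
    letI := lawsonTop X
    ⟨hX.compactSpace_of_isLawson, (hX.continuousInf_of_isLawson hmc).continuous_inf⟩
  tfae_have 2 → 3 := fun ⟨_, hcont⟩ =>
    have := @ContinuousInf.mk X (lawsonTop X) _ hcont
    letI := scottTop X
    ⟨hX.compactSpace_of_isScott,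
      (continuousInf_scott_of_continuousInf_lawson (lawsonTop X) (scottTop X)).continuous_inf⟩
  tfae_have 3 → 1 := fun ⟨_, hcont⟩ =>
    letI := scottTop X
    have := (⟨hcont⟩ : ContinuousInf X)
    meetContinuous_of_isScott
  tfae_finish
end

section
/- Every open subset U of a complete topologized semilattice X satisfying U = ↑U is Scott-open. -/
/-!
The complement `F = Uᶜ` is closed, so by completeness the supremum of every nonempty chain in `F`
exists and lies in `F`. By Iwamura's lemma the same then holds for nonempty directed sets
(Markowsky): a countable directed set has a cofinal increasing sequence, and an uncountable one
is the union of a chain of directed subsets of smaller cardinality, whose suprema form a chain.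
Hence a directed set missing `U` has its supremum outside `U`.
-/

open Set TopologicalSpace

variable (X : Type*)

open Cardinal

section BinaryClosure

variable {α : Type*} (f : α → α → α)

def binaryClosureStep (T : Set α) : Set α := T ∪ image2 f T T

def binaryClosure (S : Set α) : Set α := ⋃ n : ℕ, (binaryClosureStep f)^[n] S

variable {f}

lemma monotone_iterate_binaryClosureStep (S : Set α) :
    Monotone fun n => (binaryClosureStep f)^[n] S :=
  monotone_nat_of_le_succ fun n => by
    rw [Function.iterate_succ_apply']
    exact subset_union_left

lemma subset_binaryClosure (S : Set α) : S ⊆ binaryClosure f S :=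
  subset_iUnion (fun n => (binaryClosureStep f)^[n] S) 0

lemma binaryClosure_subset {S D : Set α} (hSD : S ⊆ D)
    (hD : ∀ x ∈ D, ∀ y ∈ D, f x y ∈ D) : binaryClosure f S ⊆ D := by
  refine iUnion_subset fun n => ?_
  induction n with
  | zero => exact hSD
  | succ n ih =>
    rw [Function.iterate_succ_apply']
    exact union_subset ih (image2_subset_iff.2 fun x hx y hy => hD x (ih hx) y (ih hy))

lemma binaryClosure_mono : Monotone (binaryClosure f) := by
  refine fun S T hST => iUnion_mono fun n => ?_
  induction n with
  | zero => exact hST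
  | succ n ih =>
    simp only [Function.iterate_succ_apply']
    exact union_subset_union ih (image2_subset ih ih)

lemma map_mem_binaryClosure {S : Set α} {x y : α} (hx : x ∈ binaryClosure f S)
    (hy : y ∈ binaryClosure f S) : f x y ∈ binaryClosure f S := by
  obtain ⟨m, hm⟩ := mem_iUnion.1 hx
  obtain ⟨n, hn⟩ := mem_iUnion.1 hy
  have hmono := monotone_iterate_binaryClosureStep (f := f) S
  refine mem_iUnion.2 ⟨max m n + 1, ?_⟩
  rw [Function.iterate_succ_apply']
  exact Or.inr (mem_image2_of_mem (hmono (le_max_left m n) hm) (hmono (le_max_right m n) hn))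

lemma mk_binaryClosure_le (S : Set α) : #(binaryClosure f S) ≤ #S + ℵ₀ := by
  have haleph0 : ℵ₀ ≤ #S + ℵ₀ := le_add_self
  have hstep : ∀ n, #((binaryClosureStep f)^[n] S) ≤ #S + ℵ₀ := by
    intro n
    induction n with
    | zero => exact self_le_add_right _ _
    | succ n ih =>
      rw [Function.iterate_succ_apply']
      calc #(binaryClosureStep f ((binaryClosureStep f)^[n] S))
          ≤ (#S + ℵ₀) + (#S + ℵ₀) * (#S + ℵ₀) :=
            (mk_union_le _ _).trans (add_le_add ih (mk_image2_le.trans (mul_le_mul' ih ih)))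
        _ = #S + ℵ₀ := by rw [mul_eq_self haleph0, add_eq_self haleph0]
  have hunion := mk_iUnion_le_lift (fun n => (binaryClosureStep f)^[n] S)
  simp only [lift_uzero, mk_nat, lift_aleph0] at hunion
  calc #(binaryClosure f S) ≤ ℵ₀ * ⨆ n, #((binaryClosureStep f)^[n] S) := hunion
    _ ≤ ℵ₀ * (#S + ℵ₀) := by gcongr; exact ciSup_le' hstep
    _ = #S + ℵ₀ := by rw [mul_eq_max le_rfl haleph0, max_eq_right haleph0]

end BinaryClosure

section DirectedSups

variable {α : Type*} [Preorder α]

lemma DirectedOn.exists_monotone_directedOn_hull {D : Set α} (hD : DirectedOn (· ≤ ·) D) :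
    ∃ Φ : Set α → Set α, Monotone Φ ∧ ∀ S ⊆ D,
      S ⊆ Φ S ∧ Φ S ⊆ D ∧ DirectedOn (· ≤ ·) (Φ S) ∧ #(Φ S) ≤ #S + ℵ₀ := by
  choose! f hfD hxf hyf using hD
  refine ⟨binaryClosure f, binaryClosure_mono, fun S hSD => ?_⟩
  have hED := binaryClosure_subset hSD hfD
  refine ⟨subset_binaryClosure S, hED, fun x hx y hy => ?_, mk_binaryClosure_le S⟩
  exact ⟨f x y, map_mem_binaryClosure hx hy, hxf x (hED hx) y (hED hy), hyf x (hED hx) y (hED hy)⟩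

lemma DirectedOn.exists_chain_cover_of_aleph0_lt {D : Set α} (hD : DirectedOn (· ≤ ·) D)
    (hcard : ℵ₀ < #D) :
    ∃ E : D → Set α, (∀ i j, E i ⊆ E j ∨ E j ⊆ E i) ∧ ⋃ i, E i = D ∧
      ∀ i, (E i).Nonempty ∧ E i ⊆ D ∧ DirectedOn (· ≤ ·) (E i) ∧ #(E i) < #D := by
  obtain ⟨Φ, hΦmono, hΦ⟩ := hD.exists_monotone_directedOn_hull
  -- `r` has order type the initial ordinal of `#D`, so its proper initial segments are smaller
  obtain ⟨r, _, hr⟩ := exists_ord_eq D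
  set S : D → Set α := fun i => insert ↑i (Subtype.val '' {j | r j i})
  have hSD i : S i ⊆ D := insert_subset i.2 (Subtype.coe_image_subset _ _)
  have hSmono {i j} (hij : r i j) : S i ⊆ S j :=
    insert_subset (mem_insert_of_mem _ ⟨i, hij, rfl⟩)
      (subset_insert _ _ |>.trans' (image_mono fun k hk => _root_.trans hk hij))
  have hScard i : #(S i) < #D := by
    have hseg : #{j | r j i} < #D := card_typein_lt i hr
    exact (mk_insert_le.trans (add_le_add_left mk_image_le 1)).trans_lt
      (add_lt_of_lt hcard.le hseg (one_lt_aleph0.trans hcard))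
  refine ⟨fun i => Φ (S i), fun i j => ?_, ?_, fun i => ?_⟩
  · rcases trichotomous_of r i j with hij | rfl | hji
    · exact Or.inl (hΦmono (hSmono hij))
    · exact Or.inl subset_rfl
    · exact Or.inr (hΦmono (hSmono hji))
  · refine subset_antisymm (iUnion_subset fun i => (hΦ _ (hSD i)).2.1) fun x hx => ?_
    exact mem_iUnion.2 ⟨⟨x, hx⟩, (hΦ _ (hSD _)).1 (mem_insert _ _)⟩
  · obtain ⟨hSΦ, hΦD, hΦdir, hΦcard⟩ := hΦ _ (hSD i)
    exact ⟨⟨i, hSΦ (mem_insert _ _)⟩, hΦD, hΦdir,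
      hΦcard.trans_lt (add_lt_of_lt hcard.le (hScard i) hcard)⟩

end DirectedSups

section ChainSupComplete

variable {α : Type*} [Preorder α]

-- The suprema are taken in `α`, not in the subposet `F`.
def ChainSupComplete (F : Set α) : Prop :=
  ∀ C ⊆ F, C.Nonempty → IsChain (· ≤ ·) C → ∃ b ∈ F, IsLUB C b

variable {F D : Set α}

lemma ChainSupComplete.exists_isLUB_mem_of_countable (hF : ChainSupComplete F) (hDF : D ⊆ F)
    (hne : D.Nonempty) (hdir : DirectedOn (· ≤ ·) D) (hcount : D.Countable) :
    ∃ b ∈ F, IsLUB D b := by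
  have : Encodable D := hcount.toEncodable
  have : Inhabited D := ⟨⟨_, hne.some_mem⟩⟩
  have hval := hdir.directed_val
  set c := Subtype.val ∘ hval.sequence Subtype.val
  have hcD : range c ⊆ D := range_subset_iff.2 fun n => (hval.sequence _ n).2
  have hcofinal : IsCofinalFor D (range c) := fun d hd =>
    ⟨_, mem_range_self _, hval.le_sequence ⟨d, hd⟩⟩
  obtain ⟨b, hbF, hb⟩ := hF _ (hcD.trans hDF) (range_nonempty c) hval.sequence_mono.isChain_range
  refine ⟨b, hbF, (isLUB_congr ?_).1 hb⟩
  exact (upperBounds_mono_set hcD).antisymm' (upperBounds_mono_of_isCofinalFor hcofinal)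

lemma ChainSupComplete.exists_isLUB_mem_of_directedOn (hF : ChainSupComplete F) (hDF : D ⊆ F)
    (hne : D.Nonempty) (hdir : DirectedOn (· ≤ ·) D) : ∃ b ∈ F, IsLUB D b := by
  induction hκ : #D using WellFoundedLT.induction generalizing D with
  | ind κ IH =>
    subst hκ
    rcases le_or_gt #D ℵ₀ with hcount | hcard
    · exact hF.exists_isLUB_mem_of_countable hDF hne hdir (le_aleph0_iff_set_countable.1 hcount)
    obtain ⟨E, hchain, hunion, hE⟩ := hdir.exists_chain_cover_of_aleph0_lt hcard
    have hsup i : ∃ s ∈ F, IsLUB (E i) s :=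
      IH _ (hE i).2.2.2 ((hE i).2.1.trans hDF) (hE i).1 (hE i).2.2.1 rfl
    choose s hsF hs using hsup
    have hschain : IsChain (· ≤ ·) (range s) := by
      rintro _ ⟨i, rfl⟩ _ ⟨j, rfl⟩ -
      exact (hchain i j).imp (fun h => (hs i).mono (hs j) h) (fun h => (hs j).mono (hs i) h)
    have : Nonempty D := hne.to_subtype
    obtain ⟨b, hbF, hb⟩ := hF _ (range_subset_iff.2 hsF) (range_nonempty s) hschain
    exact ⟨b, hbF, hunion ▸ (isLUB_iUnion_iff_of_isLUB hs b).1 hb⟩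

end ChainSupComplete

lemma CompleteTS.chainSupComplete_of_isClosed {X : Type*} [SemilatticeInf X] [TopologicalSpace X]
    (hX : CompleteTS X) {F : Set X} (hF : IsClosed F) : ChainSupComplete F := fun C hCF hne hC =>
  let ⟨_, b, hb, hbC⟩ := hX C hne hC
  ⟨b, hF.closure_subset_iff.2 hCF hbC, hb⟩

/-- Every open subset `U` of a complete topologized semilattice `X`
satisfying `U = ↑U` is Scott-open. -/
theorem stmt10 {X : Type*} [SemilatticeInf X] [TopologicalSpace X]
    (hcomp : CompleteTS X) (U : Set X) (hU : IsOpen U) (hup : IsUpperSet U) :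
    ScottOpen X U := by
  refine ⟨hup, fun D hne hdir a ha haU => ?_⟩
  by_contra hDU
  have hDF : D ⊆ Uᶜ := fun d hd hdU => hDU ⟨d, hd, hdU⟩
  obtain ⟨b, hbU, hb⟩ := (hcomp.chainSupComplete_of_isClosed hU.isClosed_compl)
    |>.exists_isLUB_mem_of_directedOn hDF hne hdir
  exact hbU (ha.unique hb ▸ haU)
end

section
/- For a semitopological semilattice X the following conditions are equivalent: (1) X is a U-semilattice; (2) X is a W-semilattice; (3) for every open set U ⊆ X with U = ↑U and every point x ∈ U there exists a point y ∈ U whose upper set ↑y is a neighborhood of x in X. -/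
open Set

/-- For a semitopological semilattice `X` the following are equivalent:
(1) `X` is a U-semilattice (each point of an open set `V` lies in the interior of `↑v` for
some `v ∈ V`); (2) `X` is a W-semilattice (each point of an open set `V` lies in the
interior of `↑F` for some finite `F ⊆ V`); (3) for every open upper set `U` and every
`x ∈ U` there is `y ∈ U` with `↑y` a neighborhood of `x`. -/
theorem stmt14 {X : Type*} [SemilatticeInf X] [TopologicalSpace X]
    (hsemi : ∀ a : X, Continuous fun x => a ⊓ x) :
    List.TFAE
      [∀ V : Set X, IsOpen V → ∀ x ∈ V, ∃ v ∈ V, x ∈ interior (Set.Ici v),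
       ∀ V : Set X, IsOpen V → ∀ x ∈ V, ∃ F : Finset X, ↑F ⊆ V ∧
         x ∈ interior (⋃ y ∈ F, Set.Ici y),
       ∀ U : Set X, IsOpen U → IsUpperSet U → ∀ x ∈ U, ∃ y ∈ U, Set.Ici y ∈ nhds x] := by
  classical
  tfae_have 1 → 2 := by
    intro h1 V hV x hx
    obtain ⟨v, hv, hint⟩ := h1 V hV x hx
    refine ⟨{v}, by simpa using hv, ?_⟩
    simpa using hint
  tfae_have 1 → 3 := by
    intro h1 U hU _ x hx
    obtain ⟨y, hy, hint⟩ := h1 U hU x hx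
    exact ⟨y, hy, mem_interior_iff_mem_nhds.mp hint⟩
  tfae_have 3 → 1 := by
    intro h3 V hV x hx
    set U : Set X := ⋃ a : X, (fun z => a ⊓ z) ⁻¹' V with hUdef
    have hUopen : IsOpen U := isOpen_iUnion fun a => hV.preimage (hsemi a)
    have hUupper : IsUpperSet U := by
      intro z z' hzz' hz
      simp only [hUdef, Set.mem_iUnion, Set.mem_preimage] at hz ⊢
      obtain ⟨a, ha⟩ := hz
      refine ⟨a ⊓ z, ?_⟩
      rwa [inf_eq_left.mpr (le_trans inf_le_right hzz')]
    have hxU : x ∈ U := by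
      simp only [hUdef, Set.mem_iUnion, Set.mem_preimage]
      exact ⟨x, by rwa [inf_idem]⟩
    obtain ⟨y, hyU, hy⟩ := h3 U hUopen hUupper x hxU
    simp only [hUdef, Set.mem_iUnion, Set.mem_preimage] at hyU
    obtain ⟨a, ha⟩ := hyU
    refine ⟨a ⊓ y, ha, ?_⟩
    rw [mem_interior_iff_mem_nhds]
    exact Filter.mem_of_superset hy fun z hz => le_trans inf_le_right hz
  tfae_have 2 → 1 := by
    intro h2 V hV x hx
    -- "Good" families: finite subsets of `V ∩ ↓x` whose upper set is a neighborhood of `x`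
    set Good : Finset X → Prop := fun F =>
      (↑F : Set X) ⊆ V ∧ (∀ f ∈ F, f ≤ x) ∧ x ∈ interior (⋃ y ∈ F, Set.Ici y) with hGood
    -- Step A: a Good family exists
    have hexists : ∃ n : ℕ, ∃ E : Finset X, Good E ∧ E.card = n := by
      have hV'open : IsOpen (V ∩ (fun z => x ⊓ z) ⁻¹' V) :=
        hV.inter (hV.preimage (hsemi x))
      have hxV' : x ∈ V ∩ (fun z => x ⊓ z) ⁻¹' V := by
        refine ⟨hx, ?_⟩
        simp only [Set.mem_preimage, inf_idem]
        exact hx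
      obtain ⟨F', hF'sub, hF'int⟩ := h2 _ hV'open x hxV'
      refine ⟨_, F'.image (fun f => x ⊓ f), ⟨?_, ?_, ?_⟩, rfl⟩
      · intro e he
        simp only [Finset.coe_image, Set.mem_image, Finset.mem_coe] at he
        obtain ⟨f, hf, rfl⟩ := he
        exact (hF'sub hf).2
      · intro f hf
        simp only [Finset.mem_image] at hf
        obtain ⟨g, _, rfl⟩ := hf
        exact inf_le_left
      · refine interior_mono ?_ hF'int
        intro z hz
        simp only [Set.mem_iUnion, Set.mem_Ici] at hz ⊢
        obtain ⟨f, hf, hle⟩ := hz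
        exact ⟨x ⊓ f, Finset.mem_image_of_mem _ hf, le_trans inf_le_right hle⟩
    -- Step B: a Good family of minimal cardinality
    obtain ⟨E, hE, hEcard⟩ := Nat.find_spec hexists
    have hmin : ∀ F : Finset X, Good F → Nat.find hexists ≤ F.card :=
      fun F hF => Nat.find_le ⟨F, hF, rfl⟩
    obtain ⟨hEV, hElex, hEint⟩ := hE
    have hEne : E.Nonempty := by
      rcases E.eq_empty_or_nonempty with h | h
      · exfalso
        rw [h] at hEint
        simp at hEint
      · exact h
    obtain ⟨f₀, hf₀⟩ := hEne
    -- Step C: second covering family inside `interior ↑E`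
    set W : Set X := interior (⋃ y ∈ E, Set.Ici y) with hWdef
    have hWopen : IsOpen W := isOpen_interior
    have hV₂open : IsOpen (W ∩ (fun z => x ⊓ z) ⁻¹' W ∩ V ∩ (fun z => x ⊓ z) ⁻¹' V) :=
      (((hWopen.inter (hWopen.preimage (hsemi x))).inter hV).inter
        (hV.preimage (hsemi x)))
    have hxV₂ : x ∈ W ∩ (fun z => x ⊓ z) ⁻¹' W ∩ V ∩ (fun z => x ⊓ z) ⁻¹' V := by
      refine ⟨⟨⟨hEint, ?_⟩, hx⟩, ?_⟩
      · simp only [Set.mem_preimage, inf_idem]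
        exact hEint
      · simp only [Set.mem_preimage, inf_idem]
        exact hx
    obtain ⟨F₂, hF₂sub, hF₂int⟩ := h2 _ hV₂open x hxV₂
    -- Step D (key): every element of `E` lies below `x ⊓ f₂` for every `f₂ ∈ F₂`
    have key : ∀ f₂ ∈ F₂, ∀ f ∈ E, f ≤ x ⊓ f₂ := by
      intro f₂ hf₂ f hf
      obtain ⟨⟨⟨_, hf₂W'⟩, _⟩, hf₂V'⟩ := hF₂sub hf₂
      set e : X := x ⊓ f₂ with hedef
      have heW : e ∈ W := hf₂W'
      have heV : e ∈ V := hf₂V'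
      have helex : e ≤ x := inf_le_left
      -- the subfamily of `E` below `e` is still Good, by continuity of the shift by `e`
      have hQ : x ∈ interior (⋃ y ∈ E.filter (fun g => g ≤ e), Set.Ici y) := by
        have hQopen : IsOpen ((fun z => e ⊓ z) ⁻¹' W) := hWopen.preimage (hsemi e)
        have hxQ : x ∈ (fun z => e ⊓ z) ⁻¹' W := by
          simp only [Set.mem_preimage]
          rwa [inf_eq_left.mpr helex]
        refine Set.mem_of_mem_of_subset hxQ (hQopen.subset_interior_iff.mpr ?_)
        intro z hz
        have hzW : e ⊓ z ∈ ⋃ y ∈ E, Set.Ici y := interior_subset hz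
        simp only [Set.mem_iUnion, Set.mem_Ici] at hzW
        obtain ⟨f', hf', hle⟩ := hzW
        simp only [Set.mem_iUnion, Set.mem_Ici]
        exact ⟨f', Finset.mem_filter.mpr ⟨hf', le_trans hle inf_le_left⟩,
          le_trans hle inf_le_right⟩
      have hGoodFilter : Good (E.filter (fun g => g ≤ e)) := by
        refine ⟨?_, ?_, hQ⟩
        · intro a ha
          simp only [Finset.coe_filter, Set.mem_setOf_eq] at ha
          exact hEV ha.1
        · intro g hg
          exact hElex g (Finset.mem_filter.mp hg).1
      -- minimality forces the subfamily to be all of `E`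
      have hcard : E.card ≤ (E.filter (fun g => g ≤ e)).card := by
        rw [hEcard]
        exact hmin _ hGoodFilter
      have heq : E.filter (fun g => g ≤ e) = E :=
        Finset.eq_of_subset_of_card_le (Finset.filter_subset _ _) hcard
      have hfmem : f ∈ E.filter (fun g => g ≤ e) := by rw [heq]; exact hf
      exact (Finset.mem_filter.mp hfmem).2
    -- Step E: conclude
    refine ⟨f₀, hEV hf₀, ?_⟩
    refine interior_mono ?_ hF₂int
    intro z hz
    simp only [Set.mem_iUnion, Set.mem_Ici] at hz
    obtain ⟨f₂, hf₂, hle⟩ := hz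
    exact le_trans (le_trans (key f₂ hf₂ f₀ hf₀) inf_le_right) hle
  tfae_finish
end

section
/- Let X be a semitopological semilattice and F ⊆ X a finite subset such that a point x ∈ X lies in the interior of the upper set ↑F. Then there exists e ∈ F such that ↑e is a neighborhood of x. -/
/-- Let `X` be a semitopological semilattice and `F ⊆ X` a finite subset such
that a point `x` lies in the interior of `↑F`. Then there exists `e ∈ F` such that `↑e` is
a neighborhood of `x`. -/
theorem stmt15 {X : Type*} [SemilatticeInf X] [TopologicalSpace X]
    (hsemi : ∀ a : X, Continuous fun x => a ⊓ x)
    (F : Finset X) (x : X) (hx : x ∈ interior (⋃ y ∈ F, Set.Ici y)) :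
    ∃ e ∈ F, Set.Ici e ∈ nhds x := by
  classical
  induction F using Finset.strongInduction generalizing x with
  | _ F ih =>
    set U := interior (⋃ y ∈ F, Set.Ici y) with hUdef
    have hUopen : IsOpen U := isOpen_interior
    have hUsub : U ⊆ ⋃ y ∈ F, Set.Ici y := interior_subset
    obtain ⟨a, ha, -⟩ : ∃ a ∈ F, a ≤ x := by
      simpa using hUsub hx
    by_cases hcase : ∀ v ∈ U ∩ (fun u => x ⊓ u) ⁻¹' U, a ≤ x ⊓ v
    · refine ⟨a, ha, ?_⟩
      have hVopen : IsOpen (U ∩ (fun u => x ⊓ u) ⁻¹' U) :=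
        hUopen.inter (hUopen.preimage (hsemi x))
      have hxV : x ∈ U ∩ (fun u => x ⊓ u) ⁻¹' U := ⟨hx, by simpa using hx⟩
      filter_upwards [hVopen.mem_nhds hxV] with v hv
      exact le_trans (hcase v hv) inf_le_right
    · push_neg at hcase
      obtain ⟨v, hv, hav⟩ := hcase
      set v' := x ⊓ v with hv'def
      have hv'U : v' ∈ U := hv.2
      have hv'x : v' ≤ x := inf_le_left
      have hKopen : IsOpen (U ∩ (fun u => v' ⊓ u) ⁻¹' U) :=
        hUopen.inter (hUopen.preimage (hsemi v'))
      have hxK : x ∈ U ∩ (fun u => v' ⊓ u) ⁻¹' U := by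
        refine ⟨hx, ?_⟩
        have : v' ⊓ x = v' := inf_eq_left.mpr hv'x
        simpa [this] using hv'U
      have hKsub : U ∩ (fun u => v' ⊓ u) ⁻¹' U ⊆ ⋃ y ∈ F.erase a, Set.Ici y := by
        rintro u ⟨huU, huP⟩
        have hmem : v' ⊓ u ∈ ⋃ y ∈ F, Set.Ici y := hUsub huP
        simp only [Set.mem_iUnion, Set.mem_Ici, exists_prop] at hmem ⊢
        obtain ⟨e, heF, he⟩ := hmem
        have hea : e ≠ a := by
          intro h
          exact hav (h ▸ le_trans he inf_le_left)
        exact ⟨e, Finset.mem_erase.mpr ⟨hea, heF⟩, le_trans he inf_le_right⟩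
      have hx' : x ∈ interior (⋃ y ∈ F.erase a, Set.Ici y) :=
        interior_maximal hKsub hKopen hxK
      obtain ⟨e, he, hne⟩ := ih (F.erase a) (Finset.erase_ssubset ha) x hx'
      exact ⟨e, Finset.mem_of_mem_erase he, hne⟩
end

section
/- Every semitopological V-semilattice X satisfying the separation axiom T1 is Zar-Hausdorff, i.e., its weak• topology 𝒵_X is Hausdorff. -/
open Set TopologicalSpace

variable (X : Type*)

/-- Every semitopological V-semilattice `X` satisfying the separation axiom
T1 is Zar-Hausdorff, i.e., its weak• topology is Hausdorff. -/
theorem stmt16 {X : Type*} [SemilatticeInf X] [TopologicalSpace X] [T1Space X]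
    (hsemi : ∀ a : X, Continuous fun x => a ⊓ x)
    (hV : ∀ x y : X, ¬ x ≤ y → ∃ v : X, v ∉ Set.Iic y ∧ x ∈ interior (Set.Ici v)) :
    @T2Space X (zarTop X) := by
  have key : ∀ x y : X, ¬ x ≤ y → ∃ u w : Set X,
      (zarTop X).IsOpen u ∧ (zarTop X).IsOpen w ∧ x ∈ u ∧ y ∈ w ∧ Disjoint u w := by
    intro x y h
    obtain ⟨v, hvy, hx⟩ := hV x y h
    have hIci : IsClosed (Set.Ici v) := by
      have : Set.Ici v = (fun z => v ⊓ z) ⁻¹' {v} := by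
        ext z; simp [Set.mem_preimage, inf_eq_left]
      rw [this]
      exact IsClosed.preimage (hsemi v) isClosed_singleton
    have hWopen : (zarTop X).IsOpen (interior (Set.Ici v)) := by
      apply TopologicalSpace.GenerateOpen.basic
      refine ⟨(interior (Set.Ici v))ᶜ, isClosed_compl_iff.mpr isOpen_interior, ?_, by simp⟩
      intro a ha b hb
      by_contra hab
      simp only [Set.mem_compl_iff, not_not] at hab
      -- a ⊓ b ∈ interior (Ici v) implies b ∈ interior (Ici v)
      apply hb
      have hsub : (fun z => a ⊓ z) ⁻¹' (interior (Set.Ici v)) ⊆ Set.Ici v := by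
        intro z hz
        have h1 : a ⊓ z ∈ Set.Ici v := interior_subset hz
        exact le_trans h1 inf_le_right
      have hopen : IsOpen ((fun z => a ⊓ z) ⁻¹' (interior (Set.Ici v))) :=
        (hsemi a).isOpen_preimage _ isOpen_interior
      have hbmem : b ∈ (fun z => a ⊓ z) ⁻¹' (interior (Set.Ici v)) := hab
      exact interior_maximal hsub hopen hbmem
    have hWc : (zarTop X).IsOpen (Set.Ici v)ᶜ := by
      apply TopologicalSpace.GenerateOpen.basic
      exact ⟨Set.Ici v, hIci, fun a ha b hb => le_inf ha hb, rfl⟩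
    refine ⟨interior (Set.Ici v), (Set.Ici v)ᶜ, hWopen, hWc, hx, hvy, ?_⟩
    exact Set.disjoint_left.mpr fun z hz hz' => hz' (interior_subset hz)
  letI := zarTop X
  constructor
  intro x y hxy
  rcases not_and_or.mp (fun hpq => hxy (le_antisymm hpq.1 hpq.2)) with h | h
  · obtain ⟨u, w, hu, hw, hxu, hyw, hd⟩ := key x y h
    exact ⟨u, w, hu, hw, hxu, hyw, hd⟩
  · obtain ⟨u, w, hu, hw, hxu, hyw, hd⟩ := key y x h
    exact ⟨w, u, hw, hu, hyw, hxu, hd.symm⟩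
end

section
/- For a ↓-chain-compact semitopological semilattice X the following conditions are equivalent: (1) the weak• topology 𝒵_X of X is Hausdorff; (2) X is 𝒵τ-separated, i.e., any distinct points x, y ∈ X have disjoint neighborhoods O_x ∈ 𝒵_X and O_y in the original topology of X; (3) X is a V-semilattice satisfying the separation axiom T1. -/
/-!
The topology of `X` is finer than `𝒵_X`, which gives (1) ⇒ (2); and for a V-semilattice with closed
upper sets `↑v`, the witnesses `int ↑v ∋ x` and `X ∖ ↑v ∋ y` of `x ≰ y` are complements of the
closed subsemilattices `X ∖ int ↑v` and `↑v`, which gives (3) ⇒ (1).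

For (2) ⇒ (3), ↓-chain-compactness and Zorn's lemma give least elements of nonempty closed
subsemilattices of each `↓w`, and then `𝒵_X`-compactness of each `↓z`. Given `x ≰ y`, compactness of
`↓(x ∧ y)` yields a finite family `𝓢` of closed subsemilattices and a neighbourhood `W` of `x` such
that each `u ≤ x ∧ y` avoids some subfamily covering `W`. Pick `s ∈ W ∩ ↓x` whose set of members
of `𝓢` containing it is minimal. Since `t ↦ s ∧ t` is continuous, for `t` near `x` the point
`s ∧ t` lies in the same members as `s`, so `t` lies above the least element `v` of their
intersection with `↓s`. Thus `x ∈ int ↑v`, and `v ≰ y` because `v` belongs to every member of `𝓢`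
that contains `s ∈ W`.
-/

open Set TopologicalSpace

variable (X : Type*)

section Preorder

variable {X} [Preorder X] [TopologicalSpace X]

theorem IsChain.closure [ClosedIicTopology X] [ClosedIciTopology X] {C : Set X}
    (hC : IsChain (· ≤ ·) C) : IsChain (· ≤ ·) (_root_.closure C) := by
  have comparable : ∀ a ∈ _root_.closure C, ∀ c ∈ C, c ≤ a ∨ a ≤ c := fun a ha c _ =>
    closure_minimal (fun d hd => hC.total ‹c ∈ C› hd) (isClosed_Ici.union isClosed_Iic) ha
  intro a ha b hb _
  exact closure_minimal (fun c hc => (comparable a ha c hc).symm)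
    (isClosed_Ici.union isClosed_Iic) hb

theorem IsChain.exists_isLeast_of_isCompact [ClosedIicTopology X] {C : Set X}
    (hC : IsChain (· ≤ ·) C) (hc : IsCompact C) (hne : C.Nonempty) : ∃ m, IsLeast C m := by
  have : Nonempty C := hne.to_subtype
  suffices (C ∩ ⋂ c : C, Iic c.1).Nonempty by
    obtain ⟨m, hm, hle⟩ := this
    exact ⟨m, hm, fun c hc => mem_iInter.1 hle ⟨c, hc⟩⟩
  refine nonempty_iff_ne_empty.2 fun h => ?_
  have hdir : Directed (· ⊇ ·) fun c : C => Iic c.1 := fun c d => by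
    rcases hC.total c.2 d.2 with h | h
    · exact ⟨c, subset_rfl, Iic_subset_Iic.2 h⟩
    · exact ⟨d, Iic_subset_Iic.2 h, subset_rfl⟩
  obtain ⟨c, hc⟩ := hc.elim_directed_family_closed _ (fun _ => isClosed_Iic) h hdir
  exact hc.subset ⟨c.2, le_rfl⟩

theorem IsChain.exists_isGreatest_of_isCompact [ClosedIciTopology X] {C : Set X}
    (hC : IsChain (· ≤ ·) C) (hc : IsCompact C) (hne : C.Nonempty) : ∃ m, IsGreatest C m :=
  IsChain.exists_isLeast_of_isCompact (X := Xᵒᵈ) hC.symm hc hne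

end Preorder

def DownChainCompact [Preorder X] [TopologicalSpace X] : Prop :=
  ∀ x : X, ∀ C : Set (Set.Iic x), IsClosed C → IsChain (· ≤ ·) C → IsCompact C

section DownChainCompact

open OrderDual

variable {X} [SemilatticeInf X] [TopologicalSpace X]

theorem DownChainCompact.isCompact (hX : DownChainCompact X) {w : X} {C : Set X}
    (hCw : C ⊆ Iic w) (hC : IsChain (· ≤ ·) C) (hcl : IsClosed C) : IsCompact C := by
  have hcomp : IsCompact ((↑) ⁻¹' C : Set (Iic w)) :=
    hX w _ (hcl.preimage continuous_subtype_val)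
      fun a ha b hb hab => hC ha hb (Subtype.coe_injective.ne hab)
  simpa [Subtype.image_preimage_coe, inter_eq_right.2 hCw] using
    hcomp.image continuous_subtype_val

variable [ClosedIicTopology X] [ClosedIciTopology X]

theorem DownChainCompact.exists_isLUB (hX : DownChainCompact X) {w : X} {C : Set X}
    (hCw : C ⊆ Iic w) (hC : IsChain (· ≤ ·) C) (hne : C.Nonempty) :
    ∃ s ∈ closure C, IsLUB C s := by
  obtain ⟨s, hs, hsup⟩ := hC.closure.exists_isGreatest_of_isCompact
    (hX.isCompact (closure_minimal hCw isClosed_Iic) hC.closure isClosed_closure) hne.closure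
  exact ⟨s, hs, fun c hc => hsup (subset_closure hc),
    fun b hb => closure_minimal hb isClosed_Iic hs⟩

theorem DownChainCompact.exists_isLeast (hX : DownChainCompact X) {w : X} {T : Set X}
    (hTw : T ⊆ Iic w) (hcl : IsClosed T) (hinf : InfClosed T) (hne : T.Nonempty) :
    ∃ m, IsLeast T m := by
  obtain ⟨t, ht⟩ := hne
  obtain ⟨m, -, hm⟩ := zorn_le_nonempty₀ (ofDual ⁻¹' T) (fun C hCT hC c hc => by
    have hC' : IsChain (· ≤ ·) (toDual ⁻¹' C) := fun a ha b hb hab => (hC ha hb hab).symm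
    have hCT' : closure (toDual ⁻¹' C) ⊆ T := closure_minimal hCT hcl
    obtain ⟨l, hl, hlow⟩ := hC'.closure.exists_isLeast_of_isCompact
      (hX.isCompact (hCT'.trans hTw) hC'.closure isClosed_closure) ⟨c, subset_closure hc⟩
    exact ⟨toDual l, hCT' hl, fun d hd => hlow (subset_closure hd)⟩) (toDual t) ht
  refine ⟨ofDual m, hm.1, fun t ht => ?_⟩
  have : toDual (ofDual m ⊓ t) = m := hm.eq_of_ge (hinf hm.1 ht) inf_le_left
  exact this ▸ inf_le_right

theorem DownChainCompact.exists_mem_sInter (hX : DownChainCompact X) {z : X}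
    {𝓢 : Set (Set X)} (hsub : ∀ S ∈ 𝓢, S ⊆ Iic z) (hcl : ∀ S ∈ 𝓢, IsClosed S)
    (hinf : ∀ S ∈ 𝓢, InfClosed S) (hne : ∀ S ∈ 𝓢, S.Nonempty)
    (hdir : ∀ S ∈ 𝓢, ∀ T ∈ 𝓢, S ∩ T ∈ 𝓢) : ∃ q ≤ z, q ∈ ⋂₀ 𝓢 := by
  set P := {p | p ≤ z ∧ ∀ S ∈ 𝓢, (S ∩ Ici p).Nonempty}
  have least_above : ∀ p ∈ P, ∀ S ∈ 𝓢, ∃ m, IsLeast (S ∩ Ici p) m := fun p hp S hS =>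
    hX.exists_isLeast (inter_subset_left.trans (hsub S hS)) ((hcl S hS).inter isClosed_Ici)
      ((hinf S hS).inter fun _ ha _ hb => le_inf ha hb) (hp.2 S hS)
  obtain ⟨p₀, hp₀⟩ := hX.exists_isLeast (w := z) subset_rfl isClosed_Iic
    (fun _ ha _ _ => inf_le_of_left_le ha) nonempty_Iic
  have hp₀P : p₀ ∈ P := ⟨hp₀.1, fun S hS =>
    let ⟨s, hs⟩ := hne S hS
    ⟨s, hs, hp₀.2 (hsub S hS hs)⟩⟩
  have chain_bdd : ∀ C ⊆ P, IsChain (· ≤ ·) C → ∀ c ∈ C, ∃ ub ∈ P, ∀ q ∈ C, q ≤ ub := by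
    intro C hCP hC c hc
    obtain ⟨s, -, hsC⟩ := hX.exists_isLUB (fun q hq => (hCP hq).1) hC ⟨c, hc⟩
    refine ⟨s, ⟨hsC.2 fun q hq => (hCP hq).1, fun S hS => ?_⟩, hsC.1⟩
    choose! μ hμ using fun q (hq : q ∈ C) => least_above q (hCP hq) S hS
    have hD : IsChain (· ≤ ·) (μ '' C) := by
      rintro _ ⟨a, ha, rfl⟩ _ ⟨b, hb, rfl⟩ -
      exact (hC.total ha hb).imp (fun h => (hμ a ha).2 ⟨(hμ b hb).1.1, h.trans (hμ b hb).1.2⟩)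
        (fun h => (hμ b hb).2 ⟨(hμ a ha).1.1, h.trans (hμ a ha).1.2⟩)
    have hDS : μ '' C ⊆ S := by rintro _ ⟨a, ha, rfl⟩; exact (hμ a ha).1.1
    obtain ⟨u, hu, huD⟩ := hX.exists_isLUB (hDS.trans (hsub S hS)) hD ⟨μ c, c, hc, rfl⟩
    exact ⟨u, closure_minimal hDS (hcl S hS) hu,
      hsC.2 fun q hq => (hμ q hq).1.2.trans (huD.1 ⟨q, hq, rfl⟩)⟩
  obtain ⟨p, -, hp⟩ := zorn_le_nonempty₀ P chain_bdd p₀ hp₀P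
  -- A maximal `p ∈ P` lies in every `S`, since the least element of `S ∩ Ici p` is again in `P`.
  refine ⟨p, hp.1.1, fun S hS => ?_⟩
  obtain ⟨m, hm⟩ := least_above p hp.1 S hS
  have hmP : m ∈ P := ⟨hsub S hS hm.1.1, fun S' hS' => by
    obtain ⟨u, ⟨huS, huS'⟩, hpu⟩ := hp.1.2 _ (hdir S hS S' hS')
    exact ⟨u, huS', hm.2 ⟨huS, hpu⟩⟩⟩
  exact hp.eq_of_ge hmP hm.1.2 ▸ hm.1.1

end DownChainCompact

section ZarTop

variable {X} [SemilatticeInf X] [t : TopologicalSpace X]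

theorem le_zarTop : t ≤ zarTop X :=
  le_generateFrom fun _ ⟨_, hS, _, hU⟩ => hU ▸ hS.isOpen_compl

theorem isOpen_zarTop_compl {S : Set X} (hS : IsClosed S) (hinf : InfClosed S) :
    @IsOpen X (zarTop X) Sᶜ :=
  isOpen_generateFrom_of_mem ⟨S, hS, fun _ ha _ hb => hinf ha hb, rfl⟩

theorem exists_finite_of_isOpen_zarTop {O : Set X} (hO : @IsOpen X (zarTop X) O) {u : X}
    (hu : u ∈ O) : ∃ 𝓖 : Set (Set X), 𝓖.Finite ∧ (∀ S ∈ 𝓖, IsClosed S ∧ InfClosed S) ∧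
      u ∉ ⋃₀ 𝓖 ∧ (⋃₀ 𝓖)ᶜ ⊆ O := by
  obtain ⟨_, ⟨𝓕, ⟨h𝓕, h𝓕sub⟩, rfl⟩, hu𝓕, h𝓕O⟩ :=
    @IsTopologicalBasis.exists_subset_of_mem_open X (zarTop X) _
      (@isTopologicalBasis_of_subbasis X (zarTop X) _ rfl) _ _ hu hO
  refine ⟨compl '' 𝓕, h𝓕.image _, ?_, ?_, ?_⟩
  · rintro _ ⟨U, hU, rfl⟩
    obtain ⟨S, hS, hinf, rfl⟩ := h𝓕sub hU
    exact ⟨by rwa [compl_compl], by rw [compl_compl]; exact fun _ ha _ hb => hinf _ ha _ hb⟩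
  · rw [← compl_sInter, notMem_compl_iff]
    exact hu𝓕
  · rwa [← compl_sInter, compl_compl]

theorem isOpen_zarTop_compl_sUnion {𝓖 : Set (Set X)} (h𝓖 : 𝓖.Finite)
    (hS : ∀ S ∈ 𝓖, IsClosed S ∧ InfClosed S) : @IsOpen X (zarTop X) (⋃₀ 𝓖)ᶜ := by
  rw [compl_sUnion]
  exact @Set.Finite.isOpen_sInter X (zarTop X) _ (h𝓖.image _) fun _ ⟨S, hS𝓖, hU⟩ =>
    hU ▸ isOpen_zarTop_compl (hS S hS𝓖).1 (hS S hS𝓖).2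

theorem DownChainCompact.isCompact_zarTop_Iic [ClosedIicTopology X] [ClosedIciTopology X]
    (hX : DownChainCompact X) (z : X) : @IsCompact X (zarTop X) (Iic z) := by
  rw [@isCompact_iff_ultrafilter_le_nhds X (zarTop X)]
  intro F hF
  obtain ⟨q, hqz, hq⟩ := hX.exists_mem_sInter (𝓢 := {S | S ⊆ Iic z ∧ IsClosed S ∧ InfClosed S ∧ S ∈ F})
    (fun S hS => hS.1) (fun S hS => hS.2.1) (fun S hS => hS.2.2.1)
    (fun S hS => F.nonempty_of_mem hS.2.2.2)
    fun S hS T hT => ⟨inter_subset_left.trans hS.1, hS.2.1.inter hT.2.1, hS.2.2.1.inter hT.2.2.1,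
      Filter.inter_mem hS.2.2.2 hT.2.2.2⟩
  refine ⟨q, hqz, ?_⟩
  rw [zarTop, nhds_generateFrom]
  refine le_iInf₂ fun U ⟨hqU, S, hS, hinf, hU⟩ => Filter.le_principal_iff.2 ?_
  subst hU
  by_contra hSF
  replace hSF : S ∈ F := Ultrafilter.compl_notMem_iff.1 hSF
  exact hqU (hq _ ⟨inter_subset_right, hS.inter isClosed_Iic,
    InfClosed.inter (fun _ ha _ hb => hinf _ ha _ hb) fun _ ha _ _ => inf_le_of_left_le ha,
    Filter.inter_mem hSF (Filter.le_principal_iff.1 hF)⟩).1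

end ZarTop

section VSemilattice

open Filter Topology

variable [SemilatticeInf X] [TopologicalSpace X]

def IsVSemilattice : Prop :=
  ∀ x y : X, ¬ x ≤ y → ∃ v : X, v ∉ Set.Iic y ∧ x ∈ interior (Set.Ici v)

def ZarSeparated : Prop :=
  ∀ x y : X, x ≠ y → ∃ Ox Oy : Set X, @IsOpen X (zarTop X) Ox ∧ IsOpen Oy ∧
    x ∈ Ox ∧ y ∈ Oy ∧ Disjoint Ox Oy

variable {X}

theorem closedIciTopology_of_t1 (hsemi : ∀ a : X, Continuous (a ⊓ ·)) [T1Space X] :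
    ClosedIciTopology X :=
  ⟨fun a => by
    have : Ici a = (a ⊓ ·) ⁻¹' {a} := ext fun _ => inf_eq_left.symm
    exact this ▸ isClosed_singleton.preimage (hsemi a)⟩

theorem closedIicTopology_of_t2 (hsemi : ∀ a : X, Continuous (a ⊓ ·)) [T2Space X] :
    ClosedIicTopology X :=
  ⟨fun a => by
    have : Iic a = {t | a ⊓ t = t} := ext fun _ => inf_eq_right.symm
    exact this ▸ isClosed_eq (hsemi a) continuous_id⟩

theorem DownChainCompact.exists_mem_interior_Ici [ClosedIicTopology X] [ClosedIciTopology X]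
    (hsemi : ∀ a : X, Continuous (a ⊓ ·)) (hX : DownChainCompact X)
    {𝓢 : Set (Set X)} (h𝓢 : 𝓢.Finite) (hS : ∀ S ∈ 𝓢, IsClosed S ∧ InfClosed S)
    {V : Set X} (hV : IsOpen V) {x : X} (hx : x ∈ V) :
    ∃ s ∈ V, s ≤ x ∧ ∃ v ≤ s, x ∈ interior (Ici v) ∧ ∀ S ∈ 𝓢, s ∈ S → v ∈ S := by
  set pattern : X → Set (Set X) := fun u => {S ∈ 𝓢 | u ∈ S}
  obtain ⟨s, ⟨hsV, hsx⟩, hmin⟩ := Set.Finite.exists_minimalFor' pattern (V ∩ Iic x)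
    (h𝓢.finite_subsets.subset (image_subset_iff.2 fun u _ => sep_subset _ _)) ⟨x, hx, le_rfl⟩
  obtain ⟨v, hv⟩ := hX.exists_isLeast (w := s) (T := ⋂₀ pattern s ∩ Iic s) inter_subset_right
    ((isClosed_sInter fun S hS' => (hS S hS'.1).1).inter isClosed_Iic)
    ((infClosed_sInter fun S hS' => (hS S hS'.1).2).inter fun _ ha _ _ => inf_le_of_left_le ha)
    ⟨s, fun S hS' => hS'.2, le_rfl⟩
  refine ⟨s, hsV, hsx, v, hv.1.2, mem_interior_iff_mem_nhds.2 ?_,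
    fun S hS𝓢 hsS => hv.1.1 S ⟨hS𝓢, hsS⟩⟩
  have hT : Tendsto (s ⊓ ·) (𝓝 x) (𝓝 s) := by
    simpa only [inf_eq_left.2 hsx] using (hsemi s).tendsto x
  have hout : ∀ᶠ t in 𝓝 x, ∀ S ∈ 𝓢, s ∉ S → s ⊓ t ∉ S :=
    (eventually_all_finite h𝓢).2 fun S hS𝓢 => by
      by_cases hsS : s ∈ S
      · exact .of_forall fun _ h => absurd hsS h
      · exact (hT.eventually ((hS S hS𝓢).1.isOpen_compl.mem_nhds hsS)).mono fun _ ht _ => ht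
  filter_upwards [hout, hT.eventually (hV.mem_nhds hsV)] with t hout ht
  have hsub : pattern (s ⊓ t) ⊆ pattern s := fun S ⟨hS𝓢, h⟩ =>
    ⟨hS𝓢, by_contra fun hs => hout S hS𝓢 hs h⟩
  have heq := hmin ⟨ht, inf_le_left.trans hsx⟩ hsub
  exact (hv.2 ⟨fun S hS' => (heq hS').2, inf_le_left⟩).trans inf_le_right

theorem exists_finite_separating_family {K : Set X} (hK : @IsCompact X (zarTop X) K) {x : X}
    (hsep : ∀ u ∈ K, ∃ O W : Set X, @IsOpen X (zarTop X) O ∧ IsOpen W ∧ u ∈ O ∧ x ∈ W ∧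
      Disjoint O W) :
    ∃ 𝓢 : Set (Set X), 𝓢.Finite ∧ (∀ S ∈ 𝓢, IsClosed S ∧ InfClosed S) ∧
      ∃ W, IsOpen W ∧ x ∈ W ∧ ∀ u ∈ K, ∃ 𝓖 ⊆ 𝓢, u ∉ ⋃₀ 𝓖 ∧ W ⊆ ⋃₀ 𝓖 := by
  have : ∀ u ∈ K, ∃ 𝓖 : Set (Set X), 𝓖.Finite ∧ (∀ S ∈ 𝓖, IsClosed S ∧ InfClosed S) ∧
      u ∉ ⋃₀ 𝓖 ∧ ∃ W, IsOpen W ∧ x ∈ W ∧ W ⊆ ⋃₀ 𝓖 := by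
    intro u hu
    obtain ⟨O, W, hO, hW, huO, hxW, hOW⟩ := hsep u hu
    obtain ⟨𝓖, h𝓖, hS, hu𝓖, h𝓖O⟩ := exists_finite_of_isOpen_zarTop hO huO
    exact ⟨𝓖, h𝓖, hS, hu𝓖, W, hW, hxW,
      fun w hw => by_contra fun h => hOW.ne_of_mem (h𝓖O h) hw rfl⟩
  choose! 𝓖 h𝓖 hS hu𝓖 W hW hxW hW𝓖 using this
  obtain ⟨I, hIK, hI, hKI⟩ := @IsCompact.elim_finite_subcover_image X X (zarTop X) _ _ _ hK
    (fun u hu => isOpen_zarTop_compl_sUnion (h𝓖 u hu) (hS u hu))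
    fun u hu => mem_biUnion hu (hu𝓖 u hu)
  refine ⟨⋃ u ∈ I, 𝓖 u, hI.biUnion fun u hu => h𝓖 u (hIK hu), fun S hS' => ?_,
    ⋂ u ∈ I, W u, hI.isOpen_biInter fun u hu => hW u (hIK hu),
    mem_iInter₂.2 fun u hu => hxW u (hIK hu), fun u' hu' => ?_⟩
  · obtain ⟨u, hu, hS'⟩ := mem_iUnion₂.1 hS'
    exact hS u (hIK hu) S hS'
  · obtain ⟨u, hu, hu'⟩ := mem_iUnion₂.1 (hKI hu')
    exact ⟨𝓖 u, subset_biUnion_of_mem hu, hu',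
      (biInter_subset_of_mem hu).trans (hW𝓖 u (hIK hu))⟩

theorem ZarSeparated.t2Space (h : ZarSeparated X) : T2Space X :=
  ⟨fun a b hab =>
    let ⟨Oa, Ob, hOa, hOb, ha, hb, hd⟩ := h a b hab
    ⟨Oa, Ob, le_zarTop _ hOa, hOb, ha, hb, hd⟩⟩

theorem ZarSeparated.isVSemilattice [ClosedIicTopology X] [ClosedIciTopology X]
    (hsemi : ∀ a : X, Continuous (a ⊓ ·)) (hX : DownChainCompact X) (h : ZarSeparated X) :
    IsVSemilattice X := by
  intro x y hxy
  obtain ⟨𝓢, h𝓢, hS, W, hW, hxW, hsep⟩ :=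
    exists_finite_separating_family (hX.isCompact_zarTop_Iic (x ⊓ y))
      fun u hu => h u x fun hux => hxy (hux ▸ hu.trans inf_le_right)
  obtain ⟨s, hsW, hsx, v, hvs, hxv, hv⟩ := hX.exists_mem_interior_Ici hsemi h𝓢 hS hW hxW
  refine ⟨v, fun hvy => ?_, hxv⟩
  obtain ⟨𝓖, h𝓖𝓢, hv𝓖, hW𝓖⟩ := hsep v (le_inf (hvs.trans hsx) hvy)
  obtain ⟨S, hS𝓖, hsS⟩ := hW𝓖 hsW
  exact hv𝓖 ⟨S, hS𝓖, hv S (h𝓖𝓢 hS𝓖) hsS⟩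

theorem infClosed_compl_interior_Ici (hsemi : ∀ a : X, Continuous (a ⊓ ·)) (v : X) :
    InfClosed (interior (Ici v))ᶜ := by
  intro a ha b _ hab
  have hcont : Continuous (· ⊓ b) := by simpa only [inf_comm] using hsemi b
  exact ha (interior_maximal (t := (· ⊓ b) ⁻¹' interior (Ici v))
    (fun t ht => le_trans (interior_subset ht) inf_le_left) (isOpen_interior.preimage hcont) hab)

theorem IsVSemilattice.t2Space_zarTop [ClosedIciTopology X]
    (hsemi : ∀ a : X, Continuous (a ⊓ ·)) (hV : IsVSemilattice X) : @T2Space X (zarTop X) := by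
  have separate : ∀ x y : X, ¬ x ≤ y → ∃ U V : Set X, @IsOpen X (zarTop X) U ∧
      @IsOpen X (zarTop X) V ∧ x ∈ U ∧ y ∈ V ∧ Disjoint U V := fun x y hxy =>
    let ⟨v, hvy, hxv⟩ := hV x y hxy
    ⟨interior (Ici v), (Ici v)ᶜ,
      compl_compl (interior (Ici v)) ▸ isOpen_zarTop_compl isOpen_interior.isClosed_compl
        (infClosed_compl_interior_Ici hsemi v),
      isOpen_zarTop_compl isClosed_Ici fun _ ha _ hb => le_inf ha hb, hxv, hvy,
      disjoint_compl_right.mono_left interior_subset⟩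
  refine @T2Space.mk X (zarTop X) fun x y hxy => ?_
  by_cases h : x ≤ y
  · obtain ⟨U, V, hU, hV, hyU, hxV, hUV⟩ := separate y x fun h' => hxy (le_antisymm h h')
    exact ⟨V, U, hV, hU, hxV, hyU, hUV.symm⟩
  · exact separate x y h

end VSemilattice

/-- For a ↓-chain-compact semitopological semilattice `X` the following are
equivalent: (1) the weak• topology `𝒵_X` is Hausdorff; (2) `X` is 𝒵τ-separated: distinct
points have disjoint neighborhoods, one `𝒵_X`-open and the other open in the original
topology; (3) `X` is a V-semilattice satisfying the separation axiom T1. -/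
theorem stmt17 {X : Type*} [SemilatticeInf X] [TopologicalSpace X]
    (hsemi : ∀ a : X, Continuous fun x => a ⊓ x)
    (hdcc : ∀ x : X, ∀ C : Set (Set.Iic x), IsClosed C → IsChain (· ≤ ·) C → IsCompact C) :
    List.TFAE
      [@T2Space X (zarTop X),
       ∀ x y : X, x ≠ y → ∃ Ox Oy : Set X, @IsOpen X (zarTop X) Ox ∧ IsOpen Oy ∧
         x ∈ Ox ∧ y ∈ Oy ∧ Disjoint Ox Oy,
       (∀ x y : X, ¬ x ≤ y → ∃ v : X, v ∉ Set.Iic y ∧ x ∈ interior (Set.Ici v)) ∧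
         T1Space X] := by
  tfae_have 1 → 2 := fun _ x y hxy =>
    let ⟨U, V, hU, hV, hxU, hyV, hUV⟩ := @t2_separation X (zarTop X) _ x y hxy
    ⟨U, V, hU, le_zarTop _ hV, hxU, hyV, hUV⟩
  tfae_have 2 → 3 := fun (h : ZarSeparated X) => by
    have := h.t2Space
    have := closedIicTopology_of_t2 hsemi
    have := closedIciTopology_of_t1 hsemi
    exact ⟨h.isVSemilattice hsemi hdcc, inferInstance⟩
  tfae_have 3 → 1 := fun ⟨(hV : IsVSemilattice X), _⟩ =>
    have := closedIciTopology_of_t1 hsemi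
    hV.t2Space_zarTop hsemi
  tfae_finish
end
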